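/- arXiv:1507.06191 — 7 statements merged into one kernel-verified Lean document; each statement's English description precedes it below -/
import Mathlib

section
/- Let f : ℝ → ℝ be a C² function on ℝ, I = [a,b] a closed interval, R ≥ max(|a|,|b|), and m, D > 0 constants with m ≤ f(x) for all x ∈ I, and |f'(x)| ≤ D and |f''(x)| ≤ D for all |x| ≤ R. Then for every natural number N with N > max{D/m + m/(16D), (1+R²)D/(Rm) + 1, 4D²/m² + 2, (1+R²)D/(2m)}, the function φ_N(x) = (1+x²)^N · f(x) satisfies φ_N''(x) > 0 for all x ∈ I; in particular φ_N is strictly convex on I. -/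
/-!
Differentiating twice gives `φ_N'' = (1 + x²)^(N-2) Q(x)`, and the bounds `f ≥ m`, `|f'|, |f''| ≤ D`
give `Q(x) ≥ P(|x|)` for an explicit polynomial `P = secondDerivLowerBound N m D`. For `u ≤ 1`,
`(N - 1) m · P(u)` is a sum of nonnegative terms plus a positive multiple of the discriminant-type
quantity controlled by `4D² < (N - 2) m²`. For `1 < u ≤ R`, monotonicity of `u + 1/u` on `[1, ∞)`
turns `(1 + R²) D < (N - 1) R m` into `(1 + u²) D ≤ (N - 1) u m`, so the `N²` term absorbs the
`f'` term, and `(1 + R²) D < 2 N m` lets the constant term absorb the `f''` term.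
-/

lemma hasDerivAt_one_add_sq_pow (k : ℕ) (x : ℝ) :
    HasDerivAt (fun y : ℝ => (1 + y ^ 2) ^ (k + 1)) (2 * (k + 1) * x * (1 + x ^ 2) ^ k) x := by
  refine (((hasDerivAt_pow 2 x).const_add 1).pow (k + 1)).congr_deriv ?_
  simp only [Nat.add_sub_cancel, Nat.cast_add, Nat.cast_one]
  ring

lemma iteratedDeriv_two_one_add_sq_pow_add_two_mul {f : ℝ → ℝ} (hf : ContDiff ℝ 2 f) (k : ℕ)
    (x : ℝ) :
    iteratedDeriv 2 (fun y => (1 + y ^ 2) ^ (k + 2) * f y) x =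
      (1 + x ^ 2) ^ k * (4 * (k + 2) * (k + 1) * x ^ 2 * f x + 2 * (k + 2) * (1 + x ^ 2) * f x
        + 4 * (k + 2) * (1 + x ^ 2) * x * deriv f x + (1 + x ^ 2) ^ 2 * iteratedDeriv 2 f x) := by
  have hf₁ : Differentiable ℝ f := hf.differentiable two_ne_zero
  have hf₂ : Differentiable ℝ (deriv f) :=
    (hf.iterate_deriv' 1 1).differentiable one_ne_zero
  have hφ' : deriv (fun y => (1 + y ^ 2) ^ (k + 2) * f y) =
      fun y => 2 * (k + 2) * y * (1 + y ^ 2) ^ (k + 1) * f y + (1 + y ^ 2) ^ (k + 2) * deriv f y := by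
    ext y
    refine (((hasDerivAt_one_add_sq_pow (k + 1) y).mul (hf₁ y).hasDerivAt).congr_deriv ?_).deriv
    push_cast
    ring
  have hφ'' := ((((hasDerivAt_id x).const_mul (2 * (k + 2 : ℝ))).mul
    (hasDerivAt_one_add_sq_pow k x)).mul (hf₁ x).hasDerivAt).add
    ((hasDerivAt_one_add_sq_pow (k + 1) x).mul (hf₂ x).hasDerivAt)
  rw [iteratedDeriv_succ, iteratedDeriv_one, hφ', iteratedDeriv_succ, iteratedDeriv_one]
  refine (hφ''.congr_deriv ?_).deriv
  simp only [id, Pi.mul_apply]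
  push_cast
  ring

theorem iteratedDeriv_two_one_add_sq_pow_mul {f : ℝ → ℝ} (hf : ContDiff ℝ 2 f) {N : ℕ}
    (hN : 2 ≤ N) (x : ℝ) :
    iteratedDeriv 2 (fun y => (1 + y ^ 2) ^ N * f y) x =
      (1 + x ^ 2) ^ (N - 2) * (4 * N * (N - 1) * x ^ 2 * f x + 2 * N * (1 + x ^ 2) * f x
        + 4 * N * (1 + x ^ 2) * x * deriv f x + (1 + x ^ 2) ^ 2 * iteratedDeriv 2 f x) := by
  obtain ⟨k, rfl⟩ := Nat.exists_eq_add_of_le' hN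
  rw [iteratedDeriv_two_one_add_sq_pow_add_two_mul hf, Nat.add_sub_cancel]
  push_cast
  ring

def secondDerivLowerBound (n m D u : ℝ) : ℝ :=
  2 * n * (1 + u ^ 2) * m + 4 * n * (n - 1) * u ^ 2 * m - 4 * n * u * (1 + u ^ 2) * D
    - (1 + u ^ 2) ^ 2 * D

lemma secondDerivLowerBound_le {n m D y₀ y₁ y₂ : ℝ} (hn : 1 ≤ n) (hy₀ : m ≤ y₀)
    (hy₁ : |y₁| ≤ D) (hy₂ : |y₂| ≤ D) (x : ℝ) :
    secondDerivLowerBound n m D |x| ≤ 4 * n * (n - 1) * x ^ 2 * y₀ + 2 * n * (1 + x ^ 2) * y₀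
      + 4 * n * (1 + x ^ 2) * x * y₁ + (1 + x ^ 2) ^ 2 * y₂ := by
  have hxy₁ : -(|x| * D) ≤ x * y₁ := by
    have := abs_mul x y₁ ▸ mul_le_mul_of_nonneg_left hy₁ (abs_nonneg x)
    linarith [neg_abs_le (x * y₁)]
  have hy₂' : -D ≤ y₂ := (abs_le.mp hy₂).1
  unfold secondDerivLowerBound
  rw [sq_abs]
  have hquad : 0 ≤ 4 * n * (n - 1) * x ^ 2 * (y₀ - m) := by
    have : 0 ≤ y₀ - m := by linarith
    have : 0 ≤ n - 1 := by linarith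
    positivity
  nlinarith [mul_le_mul_of_nonneg_left hxy₁ (by positivity : 0 ≤ 4 * n * (1 + x ^ 2)),
    mul_le_mul_of_nonneg_left hy₂' (by positivity : 0 ≤ (1 + x ^ 2) ^ 2),
    mul_le_mul_of_nonneg_left hy₀ (by positivity : 0 ≤ 2 * n * (1 + x ^ 2))]

lemma secondDerivLowerBound_pos_of_le_one {n m D u : ℝ} (hm : 0 < m) (hD : 0 < D)
    (h : 4 * D ^ 2 < (n - 2) * m ^ 2) (hu₀ : 0 ≤ u) (hu₁ : u ≤ 1) :
    0 < secondDerivLowerBound n m D u := by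
  have hn : 2 < n := by nlinarith
  have hnm : 2 * D < (n - 1) * m := by nlinarith [sq_nonneg (2 * D - m)]
  have hdisc : 0 < n * (n - 1) * m ^ 2 - (n - 1) * D * m - n * D ^ 2 := by
    nlinarith [sq_nonneg ((n - 1) * m - 2 * D), mul_pos hm hD,
      mul_pos (show (0:ℝ) < n - 2 by linarith) (mul_pos hm hm)]
  have hsq : 0 ≤ 2 * n * ((n - 1) * m * u - D) ^ 2 := by positivity
  have hcross : 0 ≤ 2 * n * u ^ 2 * ((n - 1) * m) * ((n - 1) * m - 2 * u * D) := by
    have : 0 ≤ (n - 1) * m - 2 * u * D := by nlinarith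
    have : 0 ≤ (n - 1) * m := by nlinarith
    have : 0 ≤ n := by linarith
    positivity
  have hsmall : 0 ≤ (1 - u ^ 2) * ((1 + u ^ 2) * D * ((n - 1) * m)) := by
    have : 0 ≤ 1 - u ^ 2 := by nlinarith
    have : 0 ≤ (n - 1) * m := by nlinarith
    positivity
  have hlead : 0 ≤ u ^ 2 * (n * (n - 1) * m ^ 2 - (n - 1) * D * m) := by
    have : 0 ≤ n * (n - 1) * m ^ 2 - (n - 1) * D * m := by nlinarith [mul_pos hm hD]
    positivity
  have : 0 < (n - 1) * m * secondDerivLowerBound n m D u := by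
    unfold secondDerivLowerBound
    linarith
  exact pos_of_mul_pos_right this (by nlinarith)

lemma secondDerivLowerBound_pos_of_dominated {n m D u : ℝ} (hn : 0 ≤ n) (hu : 0 ≤ u)
    (h₁ : (1 + u ^ 2) * D ≤ (n - 1) * u * m) (h₂ : (1 + u ^ 2) * D < 2 * n * m) :
    0 < secondDerivLowerBound n m D u := by
  unfold secondDerivLowerBound
  nlinarith [mul_le_mul_of_nonneg_left h₁ (by positivity : 0 ≤ 4 * n * u),
    mul_lt_mul_of_pos_left h₂ (by positivity : 0 < 1 + u ^ 2)]

lemma mul_one_add_sq_le_of_one_le {u R : ℝ} (hu : 1 ≤ u) (huR : u ≤ R) :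
    R * (1 + u ^ 2) ≤ u * (1 + R ^ 2) := by
  nlinarith [mul_nonneg (sub_nonneg.2 huR) (by nlinarith : (0:ℝ) ≤ u * R - 1)]

lemma secondDerivLowerBound_pos {n m D R u : ℝ} (hm : 0 < m) (hD : 0 < D)
    (hR : (1 + R ^ 2) * D / (R * m) + 1 < n) (hD₁ : 4 * D ^ 2 / m ^ 2 + 2 < n)
    (hD₂ : (1 + R ^ 2) * D / (2 * m) < n) (hu₀ : 0 ≤ u) (huR : u ≤ R) :
    0 < secondDerivLowerBound n m D u := by
  rcases le_or_gt u 1 with hu₁ | hu₁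
  · refine secondDerivLowerBound_pos_of_le_one hm hD ?_ hu₀ hu₁
    rw [← lt_sub_iff_add_lt, div_lt_iff₀ (by positivity)] at hD₁
    linarith
  · have hR₀ : 0 < R * m := by nlinarith
    have hn : 0 ≤ n := by linarith [div_pos (by positivity : 0 < (1 + R ^ 2) * D) hR₀]
    rw [← lt_sub_iff_add_lt, div_lt_iff₀ hR₀] at hR
    rw [div_lt_iff₀ (by positivity)] at hD₂
    refine secondDerivLowerBound_pos_of_dominated hn hu₀ ?_ ?_
    · nlinarith [mul_one_add_sq_le_of_one_le hu₁.le huR]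
    · nlinarith [pow_le_pow_left₀ hu₀ huR 2]

theorem stmt_0_general (f : ℝ → ℝ) (hf : ContDiff ℝ 2 f) (a b R m D : ℝ)
    (hR : max |a| |b| ≤ R) (hm : 0 < m) (hD : 0 < D)
    (hfm : ∀ x ∈ Set.Icc a b, m ≤ f x)
    (hf1 : ∀ x : ℝ, |x| ≤ R → |deriv f x| ≤ D)
    (hf2 : ∀ x : ℝ, |x| ≤ R → |iteratedDeriv 2 f x| ≤ D)
    (N : ℕ)
    (hN : max (max (D / m + m / (16 * D)) ((1 + R ^ 2) * D / (R * m) + 1))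
        (max (4 * D ^ 2 / m ^ 2 + 2) ((1 + R ^ 2) * D / (2 * m))) < (N : ℝ)) :
    (∀ x ∈ Set.Icc a b, 0 < iteratedDeriv 2 (fun x => (1 + x ^ 2) ^ N * f x) x) ∧
      StrictConvexOn ℝ (Set.Icc a b) (fun x => (1 + x ^ 2) ^ N * f x) := by
  have hN₁ : (1 + R ^ 2) * D / (R * m) + 1 < N :=
    (le_max_right _ _).trans_lt ((le_max_left _ _).trans_lt hN)
  have hN₂ : 4 * D ^ 2 / m ^ 2 + 2 < N :=
    (le_max_left _ _).trans_lt ((le_max_right _ _).trans_lt hN)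
  have hN₃ : (1 + R ^ 2) * D / (2 * m) < N :=
    (le_max_right _ _).trans_lt ((le_max_right _ _).trans_lt hN)
  have htwo : (2 : ℝ) < N := by linarith [div_nonneg (by positivity : 0 ≤ 4 * D ^ 2) (sq_nonneg m)]
  have hpos : ∀ x ∈ Set.Icc a b, 0 < iteratedDeriv 2 (fun x => (1 + x ^ 2) ^ N * f x) x := by
    intro x hx
    have hxR : |x| ≤ R := (abs_le_max_abs_abs hx.1 hx.2).trans hR
    rw [iteratedDeriv_two_one_add_sq_pow_mul hf (by exact_mod_cast htwo.le)]
    refine mul_pos (by positivity) ((secondDerivLowerBound_pos hm hD hN₁ hN₂ hN₃ (abs_nonneg x)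
      hxR).trans_le ?_)
    exact secondDerivLowerBound_le (by linarith) (hfm x hx) (hf1 x hxR) (hf2 x hxR) x
  refine ⟨hpos, strictConvexOn_of_deriv2_pos' (convex_Icc a b) ?_ fun x hx => ?_⟩
  · have := hf.continuous
    fun_prop
  · simpa only [iteratedDeriv_eq_iterate] using hpos x hx

/-- Lemma (convexification in one variable on a compact interval):
if `f` is `C²`, bounded below by `m > 0` on `[a,b]`, with `|f'| ≤ D`, `|f''| ≤ D`
on `[-R,R]`, `R ≥ max(|a|,|b|)`, then for every `N` exceeding the explicit bound,
`φ_N(x) = (1+x²)^N f(x)` has positive second derivative on `[a,b]`,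
and is strictly convex on `[a,b]`. -/
theorem stmt_0 (f : ℝ → ℝ) (hf : ContDiff ℝ 2 f) (a b R m D : ℝ)
    (hab : a ≤ b) (hR : max |a| |b| ≤ R) (hm : 0 < m) (hD : 0 < D)
    (hfm : ∀ x ∈ Set.Icc a b, m ≤ f x)
    (hf1 : ∀ x : ℝ, |x| ≤ R → |deriv f x| ≤ D)
    (hf2 : ∀ x : ℝ, |x| ≤ R → |iteratedDeriv 2 f x| ≤ D)
    (N : ℕ)
    (hN : max (max (D / m + m / (16 * D)) ((1 + R ^ 2) * D / (R * m) + 1))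
        (max (4 * D ^ 2 / m ^ 2 + 2) ((1 + R ^ 2) * D / (2 * m))) < (N : ℝ)) :
    (∀ x ∈ Set.Icc a b, 0 < iteratedDeriv 2 (fun x => (1 + x ^ 2) ^ N * f x) x) ∧
      StrictConvexOn ℝ (Set.Icc a b) (fun x => (1 + x ^ 2) ^ N * f x) :=
  stmt_0_general f hf a b R m D hR hm hD hfm hf1 hf2 N hN
end

section
/- Let f be a real polynomial in one variable that is positive on a closed interval I = [a,b] except possibly at 0 ∈ (a,b), i.e., f(x) > 0 for x ∈ I \ {0} and f(0) ≥ 0. Then there exists N₀ ∈ ℕ such that for all integers N ≥ N₀, the polynomial φ_N(x) = (1+x²)^N f(x) is strictly convex on I. -/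
open Polynomial Set

noncomputable def q1 (f : ℝ[X]) : ℝ[X] :=
  C 2 * (1 + X ^ 2) * f + C 4 * (X * (1 + X ^ 2)) * derivative f

noncomputable def q2 (f : ℝ[X]) : ℝ[X] :=
  (1 + X ^ 2) ^ 2 * derivative (derivative f)

noncomputable def gpoly (f : ℝ[X]) (K : ℕ) : ℝ[X] :=
  C (4 * ((K : ℝ) + 2) * ((K : ℝ) + 1)) * (X ^ 2 * f)
    + C ((K : ℝ) + 2) * q1 f + q2 f

noncomputable def Gpoly (h : ℝ[X]) (j K : ℕ) : ℝ[X] :=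
  C (4 * ((K : ℝ) + 2) * ((K : ℝ) + 1)) * (X ^ 4 * h)
    + C ((K : ℝ) + 2) *
      (C 2 * ((1 + X ^ 2) * X ^ 2) * (C (2 * (j : ℝ) + 5) * h + C 2 * X * derivative h))
    + (1 + X ^ 2) ^ 2 *
      (C (((j : ℝ) + 2) * ((j : ℝ) + 1)) * h + C (2 * ((j : ℝ) + 2)) * X * derivative h
        + X ^ 2 * derivative (derivative h))

lemma deriv2_eq (f : ℝ[X]) (K : ℕ) :
    derivative (derivative ((1 + X ^ 2) ^ (K + 2) * f))
      = (1 + X ^ 2) ^ K * gpoly f K := by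
  simp only [q1, q2, gpoly, derivative_mul, derivative_pow, derivative_add,
    derivative_one, derivative_X_pow, derivative_X, Nat.add_sub_cancel,
    Nat.cast_add, Nat.cast_ofNat, Nat.cast_one, C_add, C_1, map_natCast,
    derivative_C, derivative_natCast, derivative_ofNat, derivative_zero,
    C_eq_natCast, map_ofNat, C_mul, C_pow]
  push_cast
  ring

lemma gpoly_factor (h : ℝ[X]) (j K : ℕ) :
    gpoly (X ^ (j + 2) * h) K = X ^ j * Gpoly h j K := by
  simp only [gpoly, q1, q2, Gpoly, derivative_mul, derivative_pow, derivative_add,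
    derivative_one, derivative_X_pow, derivative_X, Nat.add_sub_cancel,
    Nat.cast_add, Nat.cast_ofNat, Nat.cast_one, C_add, C_1, map_natCast,
    derivative_C, derivative_natCast, derivative_ofNat, derivative_zero,
    C_eq_natCast, map_ofNat, C_mul, C_pow]
  push_cast
  ring

lemma poly_deriv (p : Polynomial ℝ) :
    deriv (fun x : ℝ => p.eval x) = fun x => p.derivative.eval x := by
  funext x; exact Polynomial.deriv p

lemma aux_convex {a b : ℝ} (ha : a < 0) (hb : 0 < b) (p : Polynomial ℝ)
    (hpos : ∀ x ∈ Set.Icc a b, x ≠ 0 → 0 < p.derivative.derivative.eval x) :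
    StrictConvexOn ℝ (Set.Icc a b) (fun x => p.eval x) := by
  have hd : deriv (fun x : ℝ => p.eval x) = fun x => p.derivative.eval x := poly_deriv p
  have key : ∀ c d : ℝ, a ≤ c → d ≤ b → (∀ x ∈ Set.Ioo c d, x ≠ 0) →
      StrictMonoOn (fun x => p.derivative.eval x) (Set.Icc c d) := by
    intro c d hc hd' hne
    apply strictMonoOn_of_deriv_pos (convex_Icc c d)
      (p.derivative.continuous.continuousOn)
    intro x hx
    rw [interior_Icc] at hx
    rw [poly_deriv]
    exact hpos x ⟨hc.trans hx.1.le, hx.2.le.trans hd'⟩ (hne x hx)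
  have h1 : StrictMonoOn (fun x => p.derivative.eval x) (Set.Icc a 0) :=
    key a 0 le_rfl hb.le (fun x hx => hx.2.ne)
  have h2 : StrictMonoOn (fun x => p.derivative.eval x) (Set.Icc 0 b) :=
    key 0 b ha.le le_rfl (fun x hx => hx.1.ne')
  have hmono : StrictMonoOn (fun x => p.derivative.eval x) (Set.Icc a b) := by
    intro x hx y hy hxy
    rcases le_or_gt y 0 with hy0 | hy0
    · exact h1 ⟨hx.1, hxy.le.trans hy0⟩ ⟨hy.1, hy0⟩ hxy
    rcases le_or_gt 0 x with hx0 | hx0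
    · exact h2 ⟨hx0, hx.2⟩ ⟨hx0.trans hxy.le, hy.2⟩ hxy
    · calc p.derivative.eval x < p.derivative.eval 0 :=
            h1 ⟨hx.1, hx0.le⟩ ⟨ha.le, le_rfl⟩ hx0
        _ < p.derivative.eval y := h2 ⟨le_rfl, hb.le⟩ ⟨hy0.le, hy.2⟩ hy0
  apply StrictMonoOn.strictConvexOn_of_deriv (convex_Icc a b)
    (p.continuous.continuousOn)
  rw [hd]
  exact hmono.mono interior_subset

lemma exists_delta_pos (p : ℝ[X]) (hp : 0 < p.eval 0) :
    ∃ δ > 0, ∀ x : ℝ, |x| ≤ δ → 0 < p.eval x := by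
  have hc : ContinuousAt (fun x : ℝ => p.eval x) 0 := p.continuous.continuousAt
  have h : ∀ᶠ x in nhds (0 : ℝ), 0 < p.eval x := hc.eventually (eventually_gt_nhds hp)
  rw [Metric.eventually_nhds_iff] at h
  obtain ⟨ε, hε, hball⟩ := h
  refine ⟨ε / 2, by linarith, fun x hx => hball ?_⟩
  rw [Real.dist_eq, sub_zero]
  linarith [hx]

lemma factor_lemma (f : ℝ[X]) (a b : ℝ) (ha : a < 0) (hb : 0 < b)
    (hpos : ∀ x ∈ Set.Icc a b, x ≠ 0 → 0 < f.eval x) (h00 : f.eval 0 = 0) :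
    ∃ (j : ℕ) (h : ℝ[X]), Even j ∧ f = X ^ (j + 2) * h ∧ 0 < h.eval 0 := by
  have hab : a ≤ b := (ha.trans hb).le
  have hbI : b ∈ Set.Icc a b := ⟨hab, le_rfl⟩
  have hf : f ≠ 0 := by
    intro hf
    have := hpos b hbI hb.ne'
    rw [hf] at this; simp at this
  obtain ⟨h, hfh, hnd⟩ := f.exists_eq_pow_rootMultiplicity_mul_and_not_dvd hf 0
  rw [map_zero, sub_zero] at hfh hnd
  set m := f.rootMultiplicity 0 with hm
  have hh0 : h.eval 0 ≠ 0 := by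
    rw [← coeff_zero_eq_eval_zero]
    intro hc; exact hnd (X_dvd_iff.2 hc)
  have hh0pos : 0 < h.eval 0 := by
    rcases lt_or_gt_of_ne hh0 with hneg | hposh
    · exfalso
      obtain ⟨δ, hδ, hδp⟩ := exists_delta_pos (-h) (by simpa using hneg)
      set x := min δ b / 2 with hx
      have hxpos : 0 < x := by positivity
      have hxb : x ≤ b := by
        have : min δ b ≤ b := min_le_right _ _
        rw [hx]; linarith
      have hxδ : |x| ≤ δ := by
        have h1 : min δ b ≤ δ := min_le_left _ _
        rw [abs_of_pos hxpos, hx]; linarith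
      have hfx := hpos x ⟨ha.le.trans hxpos.le, hxb⟩ hxpos.ne'
      have hhx : h.eval x < 0 := by have := hδp x hxδ; simp at this; linarith
      rw [hfh] at hfx
      simp only [eval_mul, eval_pow, eval_X] at hfx
      nlinarith [pow_pos hxpos m]
    · exact hposh
  have hm1 : 1 ≤ m := by
    by_contra hc
    push_neg at hc
    interval_cases m
    rw [hfh] at h00
    simp at h00
    exact hh0 h00
  have hmeven : Even m := by
    by_contra hc
    rw [Nat.not_even_iff_odd] at hc
    obtain ⟨δ, hδ, hδp⟩ := exists_delta_pos h hh0pos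
    set x := -(min δ (-a) / 2) with hx
    have hmin : 0 < min δ (-a) := lt_min hδ (by linarith)
    have hxneg : x < 0 := by rw [hx]; linarith
    have hxa : a ≤ x := by
      have : min δ (-a) ≤ -a := min_le_right _ _
      rw [hx]; linarith
    have hxδ : |x| ≤ δ := by
      have h1 : min δ (-a) ≤ δ := min_le_left _ _
      rw [abs_of_neg hxneg, hx]; linarith
    have hfx := hpos x ⟨hxa, by linarith⟩ hxneg.ne
    have hhx : 0 < h.eval x := hδp x hxδ
    rw [hfh] at hfx
    simp only [eval_mul, eval_pow, eval_X] at hfx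
    nlinarith [hc.pow_neg hxneg]
  have hm2 : 2 ≤ m := by
    rcases hmeven with ⟨k, hk⟩
    omega
  refine ⟨m - 2, h, ?_, ?_, hh0pos⟩
  · rcases hmeven with ⟨k, hk⟩
    exact ⟨k - 1, by omega⟩
  · rw [Nat.sub_add_cancel hm2]; exact hfh

lemma away (f : ℝ[X]) (a b δ : ℝ) (ha : a < 0) (hb : 0 < b) (hδ : 0 < δ) (hδb : δ ≤ b)
    (hpos : ∀ x ∈ Set.Icc a b, x ≠ 0 → 0 < f.eval x) :
    ∃ M : ℕ, ∀ K : ℕ, M ≤ K → ∀ x ∈ Set.Icc a b, δ ≤ |x| → 0 < (gpoly f K).eval x := by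
  have hab : a ≤ b := (ha.trans hb).le
  obtain ⟨C₁, hC₁⟩ := (isCompact_Icc (a := a) (b := b)).exists_bound_of_continuousOn
    ((q1 f).continuous.continuousOn)
  obtain ⟨C₂, hC₂⟩ := (isCompact_Icc (a := a) (b := b)).exists_bound_of_continuousOn
    ((q2 f).continuous.continuousOn)
  have hC₁0 : 0 ≤ C₁ := le_trans (norm_nonneg _) (hC₁ b ⟨hab, le_rfl⟩)
  have hC₂0 : 0 ≤ C₂ := le_trans (norm_nonneg _) (hC₂ b ⟨hab, le_rfl⟩)
  set S := Set.Icc a b ∩ {x : ℝ | δ ≤ |x|} with hS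
  have hScomp : IsCompact S :=
    isCompact_Icc.inter_right (isClosed_le continuous_const continuous_abs)
  have hSne : S.Nonempty := ⟨b, ⟨hab, le_rfl⟩, by
    rw [mem_setOf_eq, abs_of_pos hb]; exact hδb⟩
  obtain ⟨z, hzS, hzmin⟩ := hScomp.exists_isMinOn hSne (f.continuous.continuousOn)
  set c := f.eval z with hc'
  have hz0 : z ≠ 0 := by
    intro hz; rw [hz] at hzS
    have := hzS.2; rw [mem_setOf_eq, abs_zero] at this; linarith
  have hc : 0 < c := hpos z hzS.1 hz0
  obtain ⟨M, hM⟩ := exists_nat_gt ((C₁ + C₂) / (4 * δ ^ 2 * c))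
  refine ⟨M, fun K hK x hx hxδ => ?_⟩
  have he : (gpoly f K).eval x
      = 4 * ((K : ℝ) + 2) * ((K : ℝ) + 1) * (x ^ 2 * f.eval x)
        + ((K : ℝ) + 2) * (q1 f).eval x + (q2 f).eval x := by
    simp [gpoly]
  have h1 : δ ^ 2 ≤ x ^ 2 := by
    nlinarith [sq_abs x, hxδ, abs_nonneg x]
  have hfx : c ≤ f.eval x := hzmin ⟨hx, hxδ⟩
  have hq1 : |(q1 f).eval x| ≤ C₁ := by simpa [Real.norm_eq_abs] using hC₁ x hx
  have hq2 : |(q2 f).eval x| ≤ C₂ := by simpa [Real.norm_eq_abs] using hC₂ x hx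
  have hKM : (M : ℝ) ≤ K := Nat.cast_le.2 hK
  have hK0 : (0 : ℝ) ≤ K := Nat.cast_nonneg K
  have key : C₁ + C₂ < 4 * ((K : ℝ) + 1) * δ ^ 2 * c := by
    rw [div_lt_iff₀ (by positivity)] at hM
    nlinarith
  have hxf : δ ^ 2 * c ≤ x ^ 2 * f.eval x := by nlinarith
  rw [he]
  have e1 : 4 * ((K : ℝ) + 2) * ((K : ℝ) + 1) * (δ ^ 2 * c)
      ≤ 4 * ((K : ℝ) + 2) * ((K : ℝ) + 1) * (x ^ 2 * f.eval x) := by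
    apply mul_le_mul_of_nonneg_left hxf (by positivity)
  have e2 : -(((K : ℝ) + 2) * C₁) ≤ ((K : ℝ) + 2) * (q1 f).eval x := by
    have := (abs_le.1 hq1).1
    nlinarith
  have e3 : -C₂ ≤ (q2 f).eval x := (abs_le.1 hq2).1
  nlinarith [key, e1, e2, e3]

lemma near1 (f : ℝ[X]) (a b : ℝ) (ha : a < 0) (hb : 0 < b)
    (hpos : ∀ x ∈ Set.Icc a b, x ≠ 0 → 0 < f.eval x) (hf0 : 0 < f.eval 0) :
    ∃ δ, 0 < δ ∧ δ ≤ b ∧ ∃ M : ℕ, ∀ K : ℕ, M ≤ K →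
      ∀ x ∈ Set.Icc a b, |x| ≤ δ → 0 < (gpoly f K).eval x := by
  have hab : a ≤ b := (ha.trans hb).le
  set r : ℝ[X] := f + C 2 * X * derivative f - C (f.eval 0 / 2) with hr
  have hr0 : 0 < r.eval 0 := by simp [hr]; linarith
  obtain ⟨δ', hδ', hδp⟩ := exists_delta_pos r hr0
  obtain ⟨C₂, hC₂⟩ := (isCompact_Icc (a := a) (b := b)).exists_bound_of_continuousOn
    ((q2 f).continuous.continuousOn)
  obtain ⟨M, hM⟩ := exists_nat_gt (C₂ / f.eval 0)
  refine ⟨min δ' b, lt_min hδ' hb, min_le_right _ _, M, fun K hK x hx hxδ => ?_⟩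
  have hxδ' : |x| ≤ δ' := hxδ.trans (min_le_left _ _)
  have hrx : f.eval 0 / 2 < f.eval x + 2 * x * (derivative f).eval x := by
    have := hδp x hxδ'
    simp [hr] at this
    linarith
  have hq1 : f.eval 0 ≤ (q1 f).eval x := by
    have h1 : (q1 f).eval x
        = 2 * (1 + x ^ 2) * (f.eval x + 2 * x * (derivative f).eval x) := by
      simp [q1]; ring
    nlinarith [sq_nonneg x]
  have hfx : 0 ≤ f.eval x := by
    rcases eq_or_ne x 0 with h | h
    · rw [h]; exact hf0.le
    · exact (hpos x hx h).le
  have hq2 : |(q2 f).eval x| ≤ C₂ := by simpa [Real.norm_eq_abs] using hC₂ x hx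
  have he : (gpoly f K).eval x
      = 4 * ((K : ℝ) + 2) * ((K : ℝ) + 1) * (x ^ 2 * f.eval x)
        + ((K : ℝ) + 2) * (q1 f).eval x + (q2 f).eval x := by
    simp [gpoly]
  have hKM : (M : ℝ) ≤ K := Nat.cast_le.2 hK
  have hK0 : (0 : ℝ) ≤ K := Nat.cast_nonneg K
  have key : C₂ < ((K : ℝ) + 2) * f.eval 0 := by
    rw [div_lt_iff₀ hf0] at hM
    nlinarith
  rw [he]
  have e1 : 0 ≤ 4 * ((K : ℝ) + 2) * ((K : ℝ) + 1) * (x ^ 2 * f.eval x) := by positivity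
  have e2 : ((K : ℝ) + 2) * f.eval 0 ≤ ((K : ℝ) + 2) * (q1 f).eval x := by nlinarith
  have e3 : -C₂ ≤ (q2 f).eval x := (abs_le.1 hq2).1
  linarith

lemma near2 (h : ℝ[X]) (j : ℕ) (hj : Even j) (hh0 : 0 < h.eval 0) :
    ∃ δ, 0 < δ ∧ ∀ K : ℕ, ∀ x : ℝ, |x| ≤ δ → x ≠ 0 →
      0 < (X ^ j * Gpoly h j K).eval x := by
  obtain ⟨δ₁, hδ₁, hp₁⟩ := exists_delta_pos h hh0
  obtain ⟨δ₂, hδ₂, hp₂⟩ := exists_delta_pos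
    (C (2 * (j : ℝ) + 5) * h + C 2 * X * derivative h) (by simp; positivity)
  obtain ⟨δ₃, hδ₃, hp₃⟩ := exists_delta_pos
    (C (((j : ℝ) + 2) * ((j : ℝ) + 1)) * h + C (2 * ((j : ℝ) + 2)) * X * derivative h
      + X ^ 2 * derivative (derivative h)) (by simp; positivity)
  refine ⟨min δ₁ (min δ₂ δ₃), lt_min hδ₁ (lt_min hδ₂ hδ₃), fun K x hxδ hx0 => ?_⟩
  have h₁ : 0 < h.eval x := hp₁ x (hxδ.trans (min_le_left _ _))
  have h₂ := hp₂ x (hxδ.trans ((min_le_right _ _).trans (min_le_left _ _)))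
  have h₃ := hp₃ x (hxδ.trans ((min_le_right _ _).trans (min_le_right _ _)))
  simp only [eval_add, eval_mul, eval_C, eval_X, eval_pow] at h₂ h₃
  have hK0 : (0 : ℝ) ≤ K := Nat.cast_nonneg K
  have hxj : 0 < x ^ j := hj.pow_pos hx0
  rw [eval_mul]
  apply mul_pos (by simpa using hxj)
  have he : (Gpoly h j K).eval x
      = 4 * ((K : ℝ) + 2) * ((K : ℝ) + 1) * (x ^ 4 * h.eval x)
        + ((K : ℝ) + 2) * (2 * ((1 + x ^ 2) * x ^ 2)
            * ((2 * (j : ℝ) + 5) * h.eval x + 2 * x * (derivative h).eval x))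
        + (1 + x ^ 2) ^ 2 * ((((j : ℝ) + 2) * ((j : ℝ) + 1)) * h.eval x
            + (2 * ((j : ℝ) + 2)) * x * (derivative h).eval x
            + x ^ 2 * (derivative (derivative h)).eval x) := by
    simp [Gpoly]
  rw [he]
  have e1 : 0 ≤ 4 * ((K : ℝ) + 2) * ((K : ℝ) + 1) * (x ^ 4 * h.eval x) := by positivity
  have e2 : 0 ≤ ((K : ℝ) + 2) * (2 * ((1 + x ^ 2) * x ^ 2)
      * ((2 * (j : ℝ) + 5) * h.eval x + 2 * x * (derivative h).eval x)) := by positivity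
  have e3 : 0 < (1 + x ^ 2) ^ 2 * ((((j : ℝ) + 2) * ((j : ℝ) + 1)) * h.eval x
      + (2 * ((j : ℝ) + 2)) * x * (derivative h).eval x
      + x ^ 2 * (derivative (derivative h)).eval x) := by positivity
  linarith

/-- If a real univariate polynomial `f` is positive on `[a,b]` except possibly at `0 ∈ (a,b)`
(where it is nonnegative), then `(1+x²)^N f(x)` is strictly convex on `[a,b]` for all
sufficiently large `N`. -/
theorem stmt_2 (f : Polynomial ℝ) (a b : ℝ) (ha : a < 0) (hb : 0 < b)
    (hpos : ∀ x ∈ Set.Icc a b, x ≠ 0 → 0 < f.eval x) (h0 : 0 ≤ f.eval 0) :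
    ∃ N₀ : ℕ, ∀ N : ℕ, N₀ ≤ N →
      StrictConvexOn ℝ (Set.Icc a b) (fun x => (1 + x ^ 2) ^ N * f.eval x) := by
  rcases h0.lt_or_eq with hf0 | hf0
  · -- case f(0) > 0
    obtain ⟨δ, hδ, hδb, M₁, hM₁⟩ := near1 f a b ha hb hpos hf0
    obtain ⟨M₂, hM₂⟩ := away f a b δ ha hb hδ hδb hpos
    refine ⟨max M₁ M₂ + 2, fun N hN => ?_⟩
    obtain ⟨K, rfl⟩ : ∃ K, N = K + 2 := ⟨N - 2, by omega⟩
    have hK₁ : M₁ ≤ K := by omega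
    have hK₂ : M₂ ≤ K := by omega
    have hfun : (fun x : ℝ => (1 + x ^ 2) ^ (K + 2) * f.eval x)
        = fun x => ((1 + X ^ 2) ^ (K + 2) * f).eval x := by
      funext x; simp
    rw [hfun]
    apply aux_convex ha hb
    intro x hx hx0
    rw [deriv2_eq]
    simp only [eval_mul, eval_pow, eval_add, eval_one, eval_X]
    apply mul_pos (pow_pos (by nlinarith [sq_nonneg x]) K)
    rcases le_total |x| δ with hle | hge
    · exact hM₁ K hK₁ x hx hle
    · exact hM₂ K hK₂ x hx hge
  · -- case f(0) = 0
    obtain ⟨j, h, hj, hfac, hh0⟩ := factor_lemma f a b ha hb hpos hf0.symm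
    obtain ⟨δ', hδ', hnear⟩ := near2 h j hj hh0
    set δ := min δ' b with hδdef
    have hδ : 0 < δ := lt_min hδ' hb
    have hδb : δ ≤ b := min_le_right _ _
    obtain ⟨M₂, hM₂⟩ := away f a b δ ha hb hδ hδb hpos
    refine ⟨M₂ + 2, fun N hN => ?_⟩
    obtain ⟨K, rfl⟩ : ∃ K, N = K + 2 := ⟨N - 2, by omega⟩
    have hK₂ : M₂ ≤ K := by omega
    have hfun : (fun x : ℝ => (1 + x ^ 2) ^ (K + 2) * f.eval x)
        = fun x => ((1 + X ^ 2) ^ (K + 2) * f).eval x := by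
      funext x; simp
    rw [hfun]
    apply aux_convex ha hb
    intro x hx hx0
    rw [deriv2_eq]
    simp only [eval_mul, eval_pow, eval_add, eval_one, eval_X]
    apply mul_pos (pow_pos (by nlinarith [sq_nonneg x]) K)
    rcases le_total |x| δ with hle | hge
    · have : 0 < (X ^ j * Gpoly h j K).eval x :=
        hnear K x (hle.trans (min_le_left _ _)) hx0
      rw [hfac, gpoly_factor]
      exact this
    · exact hM₂ K hK₂ x hx hge
end

section
/- Let f ∈ ℝ[x₁,…,xₙ] be a polynomial positive on a compact convex set X ⊂ ℝⁿ containing at least two points, let R = max{|x| : x ∈ X}, and let 0 < m ≤ min{f(x) : x ∈ X}. Then there exists N₀ ∈ ℕ (depending only on m, R, and bounds on the first and second derivatives of f on the ball of radius R) such that for all integers N ≥ N₀ the polynomial φ_N(x) = (1+|x|²)^N f(x) is strictly convex on X. -/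
noncomputable def lineSub {n : ℕ} (x v : Fin n → ℝ) : Fin n → Polynomial ℝ :=
  fun i => Polynomial.C (x i) + Polynomial.C (v i) * Polynomial.X

lemma lineSub_eval {n : ℕ} (x v : Fin n → ℝ) (f : MvPolynomial (Fin n) ℝ) (t : ℝ) :
    Polynomial.eval t (MvPolynomial.aeval (lineSub x v) f)
      = MvPolynomial.eval (fun i => x i + t * v i) f := by
  induction f using MvPolynomial.induction_on with
  | C a => simp [lineSub]
  | add p q hp hq => simp [hp, hq]
  | mul_X p i hp =>
      simp only [map_mul, MvPolynomial.aeval_X, Polynomial.eval_mul, hp, MvPolynomial.eval_mul,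
        MvPolynomial.eval_X, lineSub, Polynomial.eval_add, Polynomial.eval_C, Polynomial.eval_X]
      ring

lemma lineSub_deriv {n : ℕ} (x v : Fin n → ℝ) (f : MvPolynomial (Fin n) ℝ) :
    Polynomial.derivative (MvPolynomial.aeval (lineSub x v) f)
      = ∑ i, Polynomial.C (v i) *
          MvPolynomial.aeval (lineSub x v) (MvPolynomial.pderiv i f) := by
  classical
  induction f using MvPolynomial.induction_on with
  | C a => simp [MvPolynomial.pderiv_C]
  | add p q hp hq => simp [hp, hq, mul_add, Finset.sum_add_distrib]
  | mul_X p i hp =>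
      simp only [map_mul, MvPolynomial.aeval_X, Polynomial.derivative_mul, hp,
        MvPolynomial.pderiv_mul, MvPolynomial.pderiv_X, map_add,
        Pi.single_apply, mul_add, Finset.sum_add_distrib, Finset.sum_mul]
      have h1 : Polynomial.derivative (lineSub x v i) = Polynomial.C (v i) := by
        simp [lineSub]
      rw [h1]
      have h2 : ∀ j : Fin n, (MvPolynomial.aeval (lineSub x v))
          (p * (if i = j then (1:MvPolynomial (Fin n) ℝ) else 0))
          = if i = j then (MvPolynomial.aeval (lineSub x v)) p else 0 := by
        intro j; split_ifs <;> simp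
      have h3 : ∀ j : Fin n, (MvPolynomial.aeval (lineSub x v))
          ((if i = j then (1:MvPolynomial (Fin n) ℝ) else 0)) = if i = j then 1 else 0 := by
        intro j; split_ifs <;> simp
      simp only [h3, mul_ite, mul_one, mul_zero, Finset.sum_ite_eq, Finset.mem_univ, if_true]
      exact congrArg₂ (· + ·) (Finset.sum_congr rfl fun j _ => (mul_assoc _ _ _))
        (mul_comm _ _)

lemma pderiv_gp {n : ℕ} (i : Fin n) :
    MvPolynomial.pderiv i ((1 : MvPolynomial (Fin n) ℝ) + ∑ j, MvPolynomial.X j ^ 2)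
      = MvPolynomial.C 2 * MvPolynomial.X i := by
  classical
  rw [map_add, map_sum]
  simp [MvPolynomial.pderiv_pow, Pi.single_apply, mul_ite, mul_one, mul_zero,
    Finset.sum_ite_eq, Finset.sum_ite_eq', map_ofNat]

lemma hess_sym {n : ℕ} (f : MvPolynomial (Fin n) ℝ) (M : ℕ) (i j : Fin n) :
    MvPolynomial.pderiv j (MvPolynomial.pderiv i
        (((1 : MvPolynomial (Fin n) ℝ) + ∑ k, MvPolynomial.X k ^ 2) ^ (M + 2) * f)) =
      (((M:MvPolynomial (Fin n) ℝ)+2) * ((M:MvPolynomial (Fin n) ℝ)+1))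
          * ((1 : MvPolynomial (Fin n) ℝ) + ∑ k, MvPolynomial.X k ^ 2) ^ M
          * (MvPolynomial.C 2 * MvPolynomial.X i) * (MvPolynomial.C 2 * MvPolynomial.X j) * f
      + ((M:MvPolynomial (Fin n) ℝ)+2)
          * ((1 : MvPolynomial (Fin n) ℝ) + ∑ k, MvPolynomial.X k ^ 2) ^ (M+1)
          * (MvPolynomial.C 2 * (if j = i then 1 else 0)) * f
      + ((M:MvPolynomial (Fin n) ℝ)+2)
          * ((1 : MvPolynomial (Fin n) ℝ) + ∑ k, MvPolynomial.X k ^ 2) ^ (M+1)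
          * ((MvPolynomial.C 2 * MvPolynomial.X i) * MvPolynomial.pderiv j f
              + (MvPolynomial.C 2 * MvPolynomial.X j) * MvPolynomial.pderiv i f)
      + ((1 : MvPolynomial (Fin n) ℝ) + ∑ k, MvPolynomial.X k ^ 2) ^ (M+2)
          * MvPolynomial.pderiv j (MvPolynomial.pderiv i f) := by
  classical
  set g : MvPolynomial (Fin n) ℝ := 1 + ∑ k, MvPolynomial.X k ^ 2 with hg
  have hpg : ∀ l : Fin n, MvPolynomial.pderiv l g = MvPolynomial.C 2 * MvPolynomial.X l :=
    fun l => pderiv_gp l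
  rw [MvPolynomial.pderiv_mul, MvPolynomial.pderiv_pow, hpg,
    show M + 2 - 1 = M + 1 from rfl]
  simp only [map_add, MvPolynomial.pderiv_mul, MvPolynomial.pderiv_pow, hpg,
    Derivation.map_natCast, MvPolynomial.pderiv_C, MvPolynomial.pderiv_C_mul,
    MvPolynomial.pderiv_X, Pi.single_apply, zero_mul, mul_zero, zero_add, add_zero,
    show M + 1 - 1 = M from rfl, show M + 2 - 1 = M + 1 from rfl]
  push_cast
  rcases eq_or_ne i j with rfl | hij
  · simp only [if_pos rfl]
    ring
  · rw [if_neg hij, if_neg (Ne.symm hij)]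
    ring


lemma hess_eval {n : ℕ} (f : MvPolynomial (Fin n) ℝ) (M : ℕ) (w : Fin n → ℝ) (i j : Fin n) :
    MvPolynomial.eval w (MvPolynomial.pderiv j (MvPolynomial.pderiv i
        (((1 : MvPolynomial (Fin n) ℝ) + ∑ k, MvPolynomial.X k ^ 2) ^ (M + 2) * f))) =
      4 * ((M:ℝ)+2) * ((M:ℝ)+1) * (1 + ∑ k, w k ^ 2) ^ M * w i * w j * MvPolynomial.eval w f
      + 2 * ((M:ℝ)+2) * (1 + ∑ k, w k ^ 2) ^ (M+1) * (if j = i then (1:ℝ) else 0)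
          * MvPolynomial.eval w f
      + 2 * ((M:ℝ)+2) * (1 + ∑ k, w k ^ 2) ^ (M+1) *
          (w i * MvPolynomial.eval w (MvPolynomial.pderiv j f)
            + w j * MvPolynomial.eval w (MvPolynomial.pderiv i f))
      + (1 + ∑ k, w k ^ 2) ^ (M+2)
          * MvPolynomial.eval w (MvPolynomial.pderiv j (MvPolynomial.pderiv i f)) := by
  rw [hess_sym]
  simp only [map_add, map_mul, map_pow, map_natCast, map_ofNat, MvPolynomial.eval_C,
    MvPolynomial.eval_X, map_one, map_zero, apply_ite (MvPolynomial.eval w), map_sum]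
  push_cast
  ring

lemma key_sum {n : ℕ} (f : MvPolynomial (Fin n) ℝ) (M : ℕ) (w v : Fin n → ℝ) :
    ∑ i, v i * ∑ j, v j * MvPolynomial.eval w (MvPolynomial.pderiv j (MvPolynomial.pderiv i
        (((1 : MvPolynomial (Fin n) ℝ) + ∑ k, MvPolynomial.X k ^ 2) ^ (M + 2) * f))) =
      4 * ((M:ℝ)+2) * ((M:ℝ)+1) * (1 + ∑ k, w k ^ 2) ^ M * (∑ i, v i * w i) ^ 2
          * MvPolynomial.eval w f
      + 2 * ((M:ℝ)+2) * (1 + ∑ k, w k ^ 2) ^ (M+1) * (∑ i, v i ^ 2) * MvPolynomial.eval w f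
      + 4 * ((M:ℝ)+2) * (1 + ∑ k, w k ^ 2) ^ (M+1) * (∑ i, v i * w i)
          * (∑ i, v i * MvPolynomial.eval w (MvPolynomial.pderiv i f))
      + (1 + ∑ k, w k ^ 2) ^ (M+2)
          * (∑ i, v i * ∑ j, v j * MvPolynomial.eval w
              (MvPolynomial.pderiv j (MvPolynomial.pderiv i f))) := by
  classical
  have hrow : ∀ i, ∑ j, v j * MvPolynomial.eval w (MvPolynomial.pderiv j (MvPolynomial.pderiv i
        (((1 : MvPolynomial (Fin n) ℝ) + ∑ k, MvPolynomial.X k ^ 2) ^ (M + 2) * f))) =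
      (4 * ((M:ℝ)+2) * ((M:ℝ)+1) * (1 + ∑ k, w k ^ 2) ^ M * w i * MvPolynomial.eval w f)
          * (∑ j, v j * w j)
      + ((2 * ((M:ℝ)+2) * (1 + ∑ k, w k ^ 2) ^ (M+1) * MvPolynomial.eval w f) * v i
      + ((2 * ((M:ℝ)+2) * (1 + ∑ k, w k ^ 2) ^ (M+1) * w i)
          * (∑ j, v j * MvPolynomial.eval w (MvPolynomial.pderiv j f))
      + ((2 * ((M:ℝ)+2) * (1 + ∑ k, w k ^ 2) ^ (M+1)
            * MvPolynomial.eval w (MvPolynomial.pderiv i f)) * (∑ j, v j * w j)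
      + (1 + ∑ k, w k ^ 2) ^ (M+2)
          * (∑ j, v j * MvPolynomial.eval w
              (MvPolynomial.pderiv j (MvPolynomial.pderiv i f)))))) := by
    intro i
    calc ∑ j, v j * MvPolynomial.eval w (MvPolynomial.pderiv j (MvPolynomial.pderiv i
            (((1 : MvPolynomial (Fin n) ℝ) + ∑ k, MvPolynomial.X k ^ 2) ^ (M + 2) * f)))
        = ∑ j, ((4 * ((M:ℝ)+2) * ((M:ℝ)+1) * (1 + ∑ k, w k ^ 2) ^ M * w i
                  * MvPolynomial.eval w f) * (v j * w j)
            + ((if j = i then (2 * ((M:ℝ)+2) * (1 + ∑ k, w k ^ 2) ^ (M+1)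
                  * MvPolynomial.eval w f) * v j else 0)
            + ((2 * ((M:ℝ)+2) * (1 + ∑ k, w k ^ 2) ^ (M+1) * w i)
                  * (v j * MvPolynomial.eval w (MvPolynomial.pderiv j f))
            + ((2 * ((M:ℝ)+2) * (1 + ∑ k, w k ^ 2) ^ (M+1)
                  * MvPolynomial.eval w (MvPolynomial.pderiv i f)) * (v j * w j)
            + (1 + ∑ k, w k ^ 2) ^ (M+2)
                * (v j * MvPolynomial.eval w
                    (MvPolynomial.pderiv j (MvPolynomial.pderiv i f))))))) := by
          refine Finset.sum_congr rfl fun j _ => ?_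
          rw [hess_eval f M w i j]
          split_ifs with h <;> ring
      _ = _ := by
          rw [Finset.sum_add_distrib, Finset.sum_add_distrib, Finset.sum_add_distrib,
            Finset.sum_add_distrib, ← Finset.mul_sum, ← Finset.mul_sum, ← Finset.mul_sum,
            ← Finset.mul_sum, Finset.sum_ite_eq' Finset.univ i]
          simp
  calc ∑ i, v i * ∑ j, v j * MvPolynomial.eval w (MvPolynomial.pderiv j (MvPolynomial.pderiv i
          (((1 : MvPolynomial (Fin n) ℝ) + ∑ k, MvPolynomial.X k ^ 2) ^ (M + 2) * f)))
      = ∑ i, ((4 * ((M:ℝ)+2) * ((M:ℝ)+1) * (1 + ∑ k, w k ^ 2) ^ M * MvPolynomial.eval w f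
              * (∑ j, v j * w j)) * (v i * w i)
          + ((2 * ((M:ℝ)+2) * (1 + ∑ k, w k ^ 2) ^ (M+1) * MvPolynomial.eval w f) * (v i * v i)
          + ((2 * ((M:ℝ)+2) * (1 + ∑ k, w k ^ 2) ^ (M+1)
                * (∑ j, v j * MvPolynomial.eval w (MvPolynomial.pderiv j f))) * (v i * w i)
          + ((2 * ((M:ℝ)+2) * (1 + ∑ k, w k ^ 2) ^ (M+1) * (∑ j, v j * w j))
                * (v i * MvPolynomial.eval w (MvPolynomial.pderiv i f))
          + (1 + ∑ k, w k ^ 2) ^ (M+2)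
              * (v i * ∑ j, v j * MvPolynomial.eval w
                  (MvPolynomial.pderiv j (MvPolynomial.pderiv i f))))))) := by
        refine Finset.sum_congr rfl fun i _ => ?_
        rw [hrow i]
        ring
    _ = _ := by
        rw [Finset.sum_add_distrib, Finset.sum_add_distrib, Finset.sum_add_distrib,
          Finset.sum_add_distrib, ← Finset.mul_sum, ← Finset.mul_sum, ← Finset.mul_sum,
          ← Finset.mul_sum, ← Finset.mul_sum]
        have hv2 : ∑ i, v i * v i = ∑ i, v i ^ 2 :=
          Finset.sum_congr rfl fun i _ => (sq (v i)) ▸ (pow_two (v i)).symm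
        rw [hv2]
        ring

lemma arith_pos (A G P s V2 D Hq m B C0 K nn : ℝ)
    (hA : 2 ≤ A) (hG1 : 1 ≤ G) (hGK : G ≤ K) (hPm : m ≤ P) (hm : 0 < m)
    (hV2 : 0 < V2) (hD2 : D ^ 2 ≤ B ^ 2 * nn * V2) (hHq : |Hq| ≤ C0 * (nn * V2))
    (hC : 0 ≤ C0) (hB : 0 ≤ B) (hnn : 0 ≤ nn)
    (hN : K * C0 * nn * m + 2 * K * B ^ 2 * nn + 1 ≤ 2 * A * m ^ 2) :
    0 < 4 * A * (A - 1) * s ^ 2 * P + 2 * A * G * V2 * P + 4 * A * G * s * D + G ^ 2 * Hq := by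
  have hGpos : (0:ℝ) < G := lt_of_lt_of_le one_pos hG1
  have hA1 : (0:ℝ) < A - 1 := by linarith
  have hA0 : (0:ℝ) < A := by linarith
  have hAm : 0 < (A - 1) * m := mul_pos hA1 hm
  have hKpos : (0:ℝ) < K := by linarith
  have hG2 : G ^ 2 ≤ G * K := by nlinarith
  -- k2 : AM-GM
  have k2 : 0 ≤ A * (2 * (A - 1) * m * s + G * D) ^ 2 :=
    mul_nonneg hA0.le (sq_nonneg _)
  -- k1
  have k1 : (A - 1) * m * (4 * A * (A - 1) * s ^ 2 * m) ≤
      (A - 1) * m * (4 * A * (A - 1) * s ^ 2 * P) := by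
    apply mul_le_mul_of_nonneg_left _ hAm.le
    apply mul_le_mul_of_nonneg_left hPm
    positivity
  -- k3
  have k3 : A * (G ^ 2 * D ^ 2) ≤ 2 * (A - 1) * (G * K * (B ^ 2 * nn * V2)) := by
    have h1 : G ^ 2 * D ^ 2 ≤ G * K * D ^ 2 :=
      mul_le_mul_of_nonneg_right hG2 (sq_nonneg D)
    have h2 : G * K * D ^ 2 ≤ G * K * (B ^ 2 * nn * V2) :=
      mul_le_mul_of_nonneg_left hD2 (by positivity)
    have h3 : A * (G ^ 2 * D ^ 2) ≤ A * (G * K * (B ^ 2 * nn * V2)) :=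
      mul_le_mul_of_nonneg_left (h1.trans h2) hA0.le
    have h4 : A * (G * K * (B ^ 2 * nn * V2)) ≤ 2 * (A - 1) * (G * K * (B ^ 2 * nn * V2)) := by
      apply mul_le_mul_of_nonneg_right (by linarith) (by positivity)
    linarith
  -- k4
  have k4 : -((A - 1) * m * (G * K * (C0 * (nn * V2)))) ≤ (A - 1) * m * (G ^ 2 * Hq) := by
    have h0 : -(C0 * (nn * V2)) ≤ Hq := neg_le_of_abs_le hHq
    have h1 : -(G ^ 2 * (C0 * (nn * V2))) ≤ G ^ 2 * Hq := by nlinarith [sq_nonneg G]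
    have h2 : G ^ 2 * (C0 * (nn * V2)) ≤ G * K * (C0 * (nn * V2)) :=
      mul_le_mul_of_nonneg_right hG2 (by positivity)
    have h3 : -(G * K * (C0 * (nn * V2))) ≤ G ^ 2 * Hq := by linarith
    nlinarith [hAm]
  -- k5
  have k5 : (A - 1) * m * (2 * A * G * V2 * m) ≤ (A - 1) * m * (2 * A * G * V2 * P) := by
    apply mul_le_mul_of_nonneg_left _ hAm.le
    apply mul_le_mul_of_nonneg_left hPm
    positivity
  -- k6 : final product
  have k6 : (A - 1) * (G * V2) * 1 ≤
      (A - 1) * (G * V2) * (2 * A * m ^ 2 - K * C0 * nn * m - 2 * K * B ^ 2 * nn) := by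
    apply mul_le_mul_of_nonneg_left (by linarith) (by positivity)
  have e2 : A * (2 * (A - 1) * m * s + G * D) ^ 2
      = 4 * A * (A - 1) ^ 2 * m ^ 2 * s ^ 2 + 4 * A * (A - 1) * m * s * G * D
        + A * (G ^ 2 * D ^ 2) := by ring
  have e2' : 0 ≤ 4 * A * (A - 1) ^ 2 * m ^ 2 * s ^ 2 + 4 * A * (A - 1) * m * s * G * D
        + A * (G ^ 2 * D ^ 2) := e2 ▸ k2
  have hT : 0 < (A - 1) * m *
      (4 * A * (A - 1) * s ^ 2 * P + 2 * A * G * V2 * P + 4 * A * G * s * D + G ^ 2 * Hq) := by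
    have hpos : 0 < (A - 1) * (G * V2) := mul_pos hA1 (mul_pos hGpos hV2)
    linarith [k1, e2', k3, k4, k5, k6]
  by_contra hcon
  push_neg at hcon
  have hle : (A - 1) * m *
      (4 * A * (A - 1) * s ^ 2 * P + 2 * A * G * V2 * P + 4 * A * G * s * D + G ^ 2 * Hq) ≤ 0 :=
    mul_nonpos_of_nonneg_of_nonpos hAm.le hcon
  linarith

open MvPolynomial in
/-- Convexification of a positive polynomial on a compact convex set: if `f > 0` on a compact
convex set `X` with at least two points and `0 < m ≤ min_X f`, then for all sufficiently
large `N` the polynomial `(1+|x|²)^N f(x)` is strictly convex on `X`. -/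
theorem stmt_7 (n : ℕ) (f : MvPolynomial (Fin n) ℝ) (X : Set (Fin n → ℝ))
    (hXconv : Convex ℝ X) (hXcomp : IsCompact X) (hX2 : ∃ x ∈ X, ∃ y ∈ X, x ≠ y)
    (m : ℝ) (hm : 0 < m) (hfm : ∀ x ∈ X, m ≤ MvPolynomial.eval x f) :
    ∃ N₀ : ℕ, ∀ N : ℕ, N₀ ≤ N →
      StrictConvexOn ℝ X
        (fun x => (1 + ∑ i, x i ^ 2) ^ N * MvPolynomial.eval x f) := by
  classical
  -- bound K for 1 + |x|²
  obtain ⟨K₀, hK₀⟩ := hXcomp.exists_bound_of_continuousOn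
    (Continuous.continuousOn (f := fun w : Fin n → ℝ => 1 + ∑ i, w i ^ 2) (by continuity))
  set K : ℝ := max K₀ 1 with hKdef
  have hK1 : (1:ℝ) ≤ K := le_max_right _ _
  have hKg : ∀ w ∈ X, 1 + ∑ i, w i ^ 2 ≤ K := by
    intro w hw
    have h := hK₀ w hw
    rw [Real.norm_eq_abs] at h
    have := le_abs_self (1 + ∑ i, w i ^ 2)
    have : 1 + ∑ i, w i ^ 2 ≤ K₀ := le_trans this h
    exact le_trans this (le_max_left _ _)
  -- bound B for first derivatives
  obtain ⟨B₀, hB₀⟩ := hXcomp.exists_bound_of_continuousOn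
    (Continuous.continuousOn
      (f := fun w : Fin n → ℝ => ∑ i, |MvPolynomial.eval w (MvPolynomial.pderiv i f)|)
      (continuous_finset_sum _ fun i _ => (MvPolynomial.continuous_eval _).abs))
  set B : ℝ := max B₀ 0 with hBdef
  have hB0 : (0:ℝ) ≤ B := le_max_right _ _
  have hBf : ∀ w ∈ X, ∀ i, |MvPolynomial.eval w (MvPolynomial.pderiv i f)| ≤ B := by
    intro w hw i
    have h := hB₀ w hw
    rw [Real.norm_eq_abs] at h
    have h1 : |MvPolynomial.eval w (MvPolynomial.pderiv i f)|
        ≤ ∑ j, |MvPolynomial.eval w (MvPolynomial.pderiv j f)| :=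
      Finset.single_le_sum (f := fun j => |MvPolynomial.eval w (MvPolynomial.pderiv j f)|)
        (fun j _ => abs_nonneg _) (Finset.mem_univ i)
    have h2 := le_abs_self (∑ j, |MvPolynomial.eval w (MvPolynomial.pderiv j f)|)
    exact le_trans (le_trans h1 (le_trans h2 h)) (le_max_left _ _)
  -- bound C0 for second derivatives
  obtain ⟨C₁, hC₁⟩ := hXcomp.exists_bound_of_continuousOn
    (Continuous.continuousOn
      (f := fun w : Fin n → ℝ =>
        ∑ i, ∑ j, |MvPolynomial.eval w (MvPolynomial.pderiv j (MvPolynomial.pderiv i f))|)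
      (continuous_finset_sum _ fun i _ =>
        continuous_finset_sum _ fun j _ => (MvPolynomial.continuous_eval _).abs))
  set C0 : ℝ := max C₁ 0 with hC0def
  have hC00 : (0:ℝ) ≤ C0 := le_max_right _ _
  have hCf : ∀ w ∈ X, ∀ i j,
      |MvPolynomial.eval w (MvPolynomial.pderiv j (MvPolynomial.pderiv i f))| ≤ C0 := by
    intro w hw i j
    have h := hC₁ w hw
    rw [Real.norm_eq_abs] at h
    have h1 : |MvPolynomial.eval w (MvPolynomial.pderiv j (MvPolynomial.pderiv i f))|
        ≤ ∑ j', |MvPolynomial.eval w (MvPolynomial.pderiv j' (MvPolynomial.pderiv i f))| :=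
      Finset.single_le_sum
        (f := fun j' => |MvPolynomial.eval w (MvPolynomial.pderiv j' (MvPolynomial.pderiv i f))|)
        (fun j' _ => abs_nonneg _) (Finset.mem_univ j)
    have h2 : ∑ j', |MvPolynomial.eval w (MvPolynomial.pderiv j' (MvPolynomial.pderiv i f))|
        ≤ ∑ i', ∑ j', |MvPolynomial.eval w (MvPolynomial.pderiv j' (MvPolynomial.pderiv i' f))| :=
      Finset.single_le_sum
        (f := fun i' => ∑ j', |MvPolynomial.eval w (MvPolynomial.pderiv j' (MvPolynomial.pderiv i' f))|)
        (fun i' _ => Finset.sum_nonneg fun j' _ => abs_nonneg _) (Finset.mem_univ i)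
    have h3 := le_abs_self (∑ i', ∑ j',
      |MvPolynomial.eval w (MvPolynomial.pderiv j' (MvPolynomial.pderiv i' f))|)
    exact le_trans (le_trans h1 (le_trans h2 (le_trans h3 h))) (le_max_left _ _)
  -- choose N₀
  obtain ⟨N₀, hN₀⟩ := exists_nat_ge
    ((K * C0 * (n:ℝ) * m + 2 * K * B ^ 2 * (n:ℝ) + 1) / (2 * m ^ 2) + 2)
  refine ⟨N₀, fun N hN => ?_⟩
  have h2m : (0:ℝ) < 2 * m ^ 2 := by positivity
  have hnum : (0:ℝ) ≤ K * C0 * (n:ℝ) * m + 2 * K * B ^ 2 * (n:ℝ) + 1 := by positivity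
  have hNr : (K * C0 * (n:ℝ) * m + 2 * K * B ^ 2 * (n:ℝ) + 1) / (2 * m ^ 2) + 2 ≤ (N:ℝ) :=
    le_trans hN₀ (Nat.cast_le.mpr hN)
  have hN2 : 2 ≤ N := by
    have h1 : (0:ℝ) ≤ (K * C0 * (n:ℝ) * m + 2 * K * B ^ 2 * (n:ℝ) + 1) / (2 * m ^ 2) :=
      div_nonneg hnum h2m.le
    have : (2:ℝ) ≤ (N:ℝ) := by linarith
    exact_mod_cast this
  obtain ⟨M, rfl⟩ : ∃ M, N = M + 2 := ⟨N - 2, by omega⟩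
  have hAN : K * C0 * (n:ℝ) * m + 2 * K * B ^ 2 * (n:ℝ) + 1 ≤ 2 * ((M:ℝ) + 2) * m ^ 2 := by
    have h1 : (K * C0 * (n:ℝ) * m + 2 * K * B ^ 2 * (n:ℝ) + 1) / (2 * m ^ 2) ≤ (M:ℝ) := by
      push_cast at hNr ⊢
      linarith
    have h2 := (div_le_iff₀ h2m).mp h1
    nlinarith [sq_nonneg m]
  -- key positivity of the Hessian quadratic form
  have key : ∀ w ∈ X, ∀ v : Fin n → ℝ, v ≠ 0 →
      0 < ∑ i, v i * ∑ j, v j * MvPolynomial.eval w (MvPolynomial.pderiv j (MvPolynomial.pderiv i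
        (((1 : MvPolynomial (Fin n) ℝ) + ∑ k, MvPolynomial.X k ^ 2) ^ (M + 2) * f))) := by
    intro w hw v hv
    rw [key_sum f M w v]
    have hG1 : (1:ℝ) ≤ 1 + ∑ k, w k ^ 2 := le_add_of_nonneg_right (by positivity)
    have hGpos : (0:ℝ) < 1 + ∑ k, w k ^ 2 := lt_of_lt_of_le one_pos hG1
    have hGK := hKg w hw
    have hPm := hfm w hw
    obtain ⟨i₀, hi₀⟩ := Function.ne_iff.mp hv
    have hV2 : 0 < ∑ i, v i ^ 2 :=
      Finset.sum_pos' (fun i _ => sq_nonneg _) ⟨i₀, Finset.mem_univ _, pow_two_pos_of_ne_zero (by simpa using hi₀)⟩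
    have hV1 : (∑ i, |v i|) ^ 2 ≤ (n:ℝ) * ∑ i, v i ^ 2 := by
      have h := sq_sum_le_card_mul_sum_sq (s := (Finset.univ : Finset (Fin n)))
        (f := fun i => |v i|)
      simpa [sq_abs, Finset.card_univ] using h
    have hV1n : (0:ℝ) ≤ ∑ i, |v i| := Finset.sum_nonneg fun i _ => abs_nonneg _
    have hD : |∑ i, v i * MvPolynomial.eval w (MvPolynomial.pderiv i f)| ≤ B * ∑ i, |v i| := by
      calc |∑ i, v i * MvPolynomial.eval w (MvPolynomial.pderiv i f)|
          ≤ ∑ i, |v i * MvPolynomial.eval w (MvPolynomial.pderiv i f)| :=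
            Finset.abs_sum_le_sum_abs _ _
        _ ≤ ∑ i, |v i| * B := by
            refine Finset.sum_le_sum fun i _ => ?_
            rw [abs_mul]
            exact mul_le_mul_of_nonneg_left (hBf w hw i) (abs_nonneg _)
        _ = B * ∑ i, |v i| := by rw [← Finset.sum_mul, mul_comm]
    have hD2 : (∑ i, v i * MvPolynomial.eval w (MvPolynomial.pderiv i f)) ^ 2
        ≤ B ^ 2 * (n:ℝ) * (∑ i, v i ^ 2) := by
      have h1 : (∑ i, v i * MvPolynomial.eval w (MvPolynomial.pderiv i f)) ^ 2
          ≤ (B * ∑ i, |v i|) ^ 2 := by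
        rw [← sq_abs]
        exact pow_le_pow_left₀ (abs_nonneg _) hD 2
      have h2 : (B * ∑ i, |v i|) ^ 2 = B ^ 2 * (∑ i, |v i|) ^ 2 := by ring
      have h3 : B ^ 2 * (∑ i, |v i|) ^ 2 ≤ B ^ 2 * ((n:ℝ) * ∑ i, v i ^ 2) :=
        mul_le_mul_of_nonneg_left hV1 (sq_nonneg B)
      calc (∑ i, v i * MvPolynomial.eval w (MvPolynomial.pderiv i f)) ^ 2
          ≤ (B * ∑ i, |v i|) ^ 2 := h1
        _ = B ^ 2 * (∑ i, |v i|) ^ 2 := h2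
        _ ≤ B ^ 2 * ((n:ℝ) * ∑ i, v i ^ 2) := h3
        _ = B ^ 2 * (n:ℝ) * (∑ i, v i ^ 2) := by ring
    have hHq : |∑ i, v i * ∑ j, v j * MvPolynomial.eval w
          (MvPolynomial.pderiv j (MvPolynomial.pderiv i f))|
        ≤ C0 * ((n:ℝ) * ∑ i, v i ^ 2) := by
      have hrow : ∀ i, |∑ j, v j * MvPolynomial.eval w
          (MvPolynomial.pderiv j (MvPolynomial.pderiv i f))| ≤ (∑ j, |v j|) * C0 := by
        intro i
        calc |∑ j, v j * MvPolynomial.eval w (MvPolynomial.pderiv j (MvPolynomial.pderiv i f))|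
            ≤ ∑ j, |v j * MvPolynomial.eval w (MvPolynomial.pderiv j (MvPolynomial.pderiv i f))| :=
              Finset.abs_sum_le_sum_abs _ _
          _ ≤ ∑ j, |v j| * C0 := by
              refine Finset.sum_le_sum fun j _ => ?_
              rw [abs_mul]
              exact mul_le_mul_of_nonneg_left (hCf w hw i j) (abs_nonneg _)
          _ = (∑ j, |v j|) * C0 := by rw [← Finset.sum_mul]
      calc |∑ i, v i * ∑ j, v j * MvPolynomial.eval w
            (MvPolynomial.pderiv j (MvPolynomial.pderiv i f))|
          ≤ ∑ i, |v i * ∑ j, v j * MvPolynomial.eval w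
            (MvPolynomial.pderiv j (MvPolynomial.pderiv i f))| := Finset.abs_sum_le_sum_abs _ _
        _ ≤ ∑ i, |v i| * ((∑ j, |v j|) * C0) := by
            refine Finset.sum_le_sum fun i _ => ?_
            rw [abs_mul]
            exact mul_le_mul_of_nonneg_left (hrow i) (abs_nonneg _)
        _ = C0 * (∑ i, |v i|) ^ 2 := by rw [← Finset.sum_mul]; ring
        _ ≤ C0 * ((n:ℝ) * ∑ i, v i ^ 2) := mul_le_mul_of_nonneg_left hV1 hC00
    have harith := arith_pos ((M:ℝ) + 2) (1 + ∑ k, w k ^ 2) (MvPolynomial.eval w f)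
      (∑ i, v i * w i) (∑ i, v i ^ 2)
      (∑ i, v i * MvPolynomial.eval w (MvPolynomial.pderiv i f))
      (∑ i, v i * ∑ j, v j * MvPolynomial.eval w
        (MvPolynomial.pderiv j (MvPolynomial.pderiv i f)))
      m B C0 K (n:ℝ) (by linarith) hG1 hGK hPm hm hV2 hD2 hHq hC00 hB0 (Nat.cast_nonneg n) hAN
    have hGM : (0:ℝ) < (1 + ∑ k, w k ^ 2) ^ M := pow_pos hGpos M
    have hfact :
        4 * ((M:ℝ) + 2) * ((M:ℝ) + 1) * (1 + ∑ k, w k ^ 2) ^ M * (∑ i, v i * w i) ^ 2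
            * MvPolynomial.eval w f
          + 2 * ((M:ℝ) + 2) * (1 + ∑ k, w k ^ 2) ^ (M + 1) * (∑ i, v i ^ 2)
            * MvPolynomial.eval w f
          + 4 * ((M:ℝ) + 2) * (1 + ∑ k, w k ^ 2) ^ (M + 1) * (∑ i, v i * w i)
            * (∑ i, v i * MvPolynomial.eval w (MvPolynomial.pderiv i f))
          + (1 + ∑ k, w k ^ 2) ^ (M + 2)
            * (∑ i, v i * ∑ j, v j * MvPolynomial.eval w
              (MvPolynomial.pderiv j (MvPolynomial.pderiv i f)))
        = (1 + ∑ k, w k ^ 2) ^ M *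
          (4 * ((M:ℝ) + 2) * (((M:ℝ) + 2) - 1) * (∑ i, v i * w i) ^ 2 * MvPolynomial.eval w f
            + 2 * ((M:ℝ) + 2) * (1 + ∑ k, w k ^ 2) * (∑ i, v i ^ 2) * MvPolynomial.eval w f
            + 4 * ((M:ℝ) + 2) * (1 + ∑ k, w k ^ 2) * (∑ i, v i * w i)
              * (∑ i, v i * MvPolynomial.eval w (MvPolynomial.pderiv i f))
            + (1 + ∑ k, w k ^ 2) ^ 2
              * (∑ i, v i * ∑ j, v j * MvPolynomial.eval w
                (MvPolynomial.pderiv j (MvPolynomial.pderiv i f)))) := by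
      ring
    rw [hfact]
    exact mul_pos hGM harith
  -- now prove strict convexity via 1-dimensional slices
  refine ⟨hXconv, fun x hx y hy hxy a b ha hb hab => ?_⟩
  set v : Fin n → ℝ := fun i => y i - x i with hvdef
  have hvne : v ≠ 0 := by
    intro h
    apply hxy
    funext i
    have := congrFun h i
    simp only [hvdef, Pi.zero_apply] at this
    linarith
  set F : MvPolynomial (Fin n) ℝ :=
    ((1 : MvPolynomial (Fin n) ℝ) + ∑ k, MvPolynomial.X k ^ 2) ^ (M + 2) * f with hFdef
  have hFev : ∀ z : Fin n → ℝ,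
      MvPolynomial.eval z F = (1 + ∑ i, z i ^ 2) ^ (M + 2) * MvPolynomial.eval z f := by
    intro z
    simp [hFdef]
  set P : Polynomial ℝ := MvPolynomial.aeval (lineSub x v) F with hPdef
  have hψ : ∀ t : ℝ, Polynomial.eval t P
      = MvPolynomial.eval (fun i => x i + t * v i) F := fun t => lineSub_eval x v F t
  have hconv : StrictConvexOn ℝ (Set.Icc (0:ℝ) 1) (fun t => Polynomial.eval t P) := by
    apply strictConvexOn_of_deriv2_pos (convex_Icc 0 1) P.continuousOn
    intro t ht
    rw [interior_Icc] at ht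
    have hiter : (deriv^[2] fun s => Polynomial.eval s P) t
        = Polynomial.eval t (Polynomial.derivative (Polynomial.derivative P)) := by
      have hd1 : (deriv fun s => Polynomial.eval s P)
          = fun s => Polynomial.eval s (Polynomial.derivative P) :=
        funext fun s => (Polynomial.hasDerivAt P s).deriv
      have h2 : (deriv^[2] fun s => Polynomial.eval s P)
          = deriv (deriv fun s => Polynomial.eval s P) := rfl
      rw [h2, hd1]
      exact (Polynomial.hasDerivAt (Polynomial.derivative P) t).deriv
    rw [hiter]
    have hPdd : Polynomial.derivative (Polynomial.derivative P)
        = ∑ i, Polynomial.C (v i) * ∑ j, Polynomial.C (v j) *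
            MvPolynomial.aeval (lineSub x v) (MvPolynomial.pderiv j (MvPolynomial.pderiv i F)) := by
      rw [hPdef, lineSub_deriv, map_sum]
      refine Finset.sum_congr rfl fun i _ => ?_
      rw [Polynomial.derivative_C_mul, lineSub_deriv, Finset.mul_sum]
    rw [hPdd]
    have heval : Polynomial.eval t (∑ i, Polynomial.C (v i) * ∑ j, Polynomial.C (v j) *
          MvPolynomial.aeval (lineSub x v) (MvPolynomial.pderiv j (MvPolynomial.pderiv i F)))
        = ∑ i, v i * ∑ j, v j * MvPolynomial.eval (fun k => x k + t * v k)
            (MvPolynomial.pderiv j (MvPolynomial.pderiv i F)) := by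
      rw [Polynomial.eval_finset_sum]
      refine Finset.sum_congr rfl fun i _ => ?_
      rw [Polynomial.eval_mul, Polynomial.eval_C, Polynomial.eval_finset_sum]
      congr 1
      refine Finset.sum_congr rfl fun j _ => ?_
      rw [Polynomial.eval_mul, Polynomial.eval_C, lineSub_eval]
    rw [heval]
    have hwX : (fun k => x k + t * v k) ∈ X := by
      have hmem := hXconv hx hy (by linarith [ht.2] : (0:ℝ) ≤ 1 - t) ht.1.le (by ring)
      convert hmem using 1
      funext k
      simp only [Pi.add_apply, Pi.smul_apply, smul_eq_mul, hvdef]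
      ring
    exact key _ hwX v hvne
  have h01 : (0:ℝ) ∈ Set.Icc (0:ℝ) 1 := Set.mem_Icc.mpr ⟨le_refl 0, zero_le_one⟩
  have h11 : (1:ℝ) ∈ Set.Icc (0:ℝ) 1 := Set.mem_Icc.mpr ⟨zero_le_one, le_refl 1⟩
  have hlt := hconv.2 h01 h11 (by norm_num : (0:ℝ) ≠ 1) ha hb hab
  simp only [smul_eq_mul, mul_zero, mul_one, zero_add] at hlt
  -- identify values
  have ha1 : a = 1 - b := by linarith
  have hb0 : Polynomial.eval (0:ℝ) P = (1 + ∑ i, x i ^ 2) ^ (M + 2) * MvPolynomial.eval x f := by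
    rw [hψ 0, show (fun i => x i + 0 * v i) = x from funext fun i => by ring, hFev]
  have hb1 : Polynomial.eval (1:ℝ) P = (1 + ∑ i, y i ^ 2) ^ (M + 2) * MvPolynomial.eval y f := by
    rw [hψ 1, show (fun i => x i + 1 * v i) = y from funext fun i => by simp [hvdef], hFev]
  have hbb : Polynomial.eval b P
      = (1 + ∑ i, (a • x + b • y) i ^ 2) ^ (M + 2) * MvPolynomial.eval (a • x + b • y) f := by
    rw [hψ b, show (fun i => x i + b * v i) = a • x + b • y from funext fun i => by
      simp only [Pi.add_apply, Pi.smul_apply, smul_eq_mul, hvdef, ha1]; ring, hFev]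
  rw [hb0, hb1, hbb] at hlt
  exact hlt
end

section
/- Let f ∈ ℝ[x₁,…,xₙ] (n ≥ 2) be a polynomial of degree d with leading form f_d (the homogeneous part of degree d). If f is convex on the complement of some ball {x : |x| > R}, then f_d is a convex function on ℝⁿ. -/
/-!
Restricted to the line `s ↦ p + s • v`, the second derivative of `f` at `t • p` in direction
`t • v` is `∑ₖ tᵏ · (second derivative of f_k at p in direction v)`. For `p ≠ 0` the point `t • p`
eventually leaves the ball, where `f` is locally convex, so this sum is nonnegative; dividing by
`t ^ d` and letting `t → ∞` shows that the second derivative of `f_d` at `p` is nonnegative. At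
`p = 0` this follows by continuity along the line, and a polynomial whose second derivative
along every line is nonnegative is convex.
-/

open Filter Set Topology Finset Polynomial

namespace Polynomial

theorem deriv_fun_eval (P : ℝ[X]) :
    _root_.deriv (fun s => P.eval s) = fun s => P.derivative.eval s :=
  _root_.funext fun _ => P.deriv

theorem zero_le_eval_derivative_derivative_of_convexOn {P : ℝ[X]} {V : Set ℝ} {s : ℝ}
    (hV : IsOpen V) (hs : s ∈ V) (hP : ConvexOn ℝ V fun u => P.eval u) :
    0 ≤ P.derivative.derivative.eval s := by
  have hmono : MonotoneOn (fun u => P.derivative.eval u) V := by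
    simpa only [deriv_fun_eval] using hP.monotoneOn_deriv fun u _ => P.differentiableAt
  have hacc : AccPt s (𝓟 V) := by
    simpa using (PerfectSpace.univ_preperfect.open_inter hV) s ⟨hs, mem_univ s⟩
  exact (P.derivative.hasDerivAt s).hasDerivWithinAt.nonneg_of_monotoneOn hacc hmono

theorem convexOn_univ_of_eval_derivative_derivative_nonneg {P : ℝ[X]}
    (hP : ∀ s, 0 ≤ P.derivative.derivative.eval s) : ConvexOn ℝ univ fun s => P.eval s := by
  refine convexOn_univ_of_deriv2_nonneg P.differentiable ?_ ?_
  · rw [deriv_fun_eval]; exact P.derivative.differentiable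
  · simpa [deriv_fun_eval] using hP

end Polynomial

theorem tendsto_sum_range_pow_mul_div_pow_atTop (c : ℕ → ℝ) (d : ℕ) :
    Tendsto (fun t : ℝ => (∑ k ∈ range (d + 1), t ^ k * c k) / t ^ d) atTop (𝓝 (c d)) := by
  have hterm : ∀ k ∈ range (d + 1),
      Tendsto (fun t : ℝ => c k * t ^ ((k : ℤ) - d)) atTop (𝓝 (if k = d then c k else 0)) := by
    intro k hk
    rcases eq_or_ne k d with rfl | hkd
    · simp
    · have hneg : (k : ℤ) - d < 0 := by have := mem_range.1 hk; omega
      simpa [hkd] using (tendsto_zpow_atTop_zero hneg).const_mul (c k)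
  have hsum := tendsto_finsetSum _ hterm
  rw [sum_ite_eq', if_pos (self_mem_range_succ d)] at hsum
  refine hsum.congr' ?_
  filter_upwards [eventually_gt_atTop 0] with t ht
  rw [sum_div]
  refine sum_congr rfl fun k _ => ?_
  rw [zpow_sub₀ ht.ne', zpow_natCast, zpow_natCast]
  ring

theorem eventually_lt_sqrt_sum_sq_smul {ι : Type*} [Fintype ι] {p : ι → ℝ} (hp : p ≠ 0)
    (R : ℝ) : ∀ᶠ t : ℝ in atTop, R < √(∑ i, (t • p) i ^ 2) := by
  obtain ⟨j, hj⟩ := Function.ne_iff.1 hp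
  have hgrow : Tendsto (fun t : ℝ => t * |p j|) atTop atTop :=
    tendsto_id.atTop_mul_const (abs_pos.2 hj)
  filter_upwards [hgrow.eventually_gt_atTop R, eventually_ge_atTop (0 : ℝ)] with t htR ht
  calc R < t * |p j| := htR
    _ = |(t • p) j| := by simp [abs_mul, abs_of_nonneg ht]
    _ ≤ √(∑ i, (t • p) i ^ 2) :=
      Real.abs_le_sqrt (single_le_sum (fun i _ => sq_nonneg ((t • p) i)) (mem_univ (α := ι) j))

namespace MvPolynomial

variable {σ R : Type*}

theorem IsHomogeneous.eval_smul [CommSemiring R] [Fintype σ] {φ : MvPolynomial σ R} {k : ℕ}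
    (hφ : φ.IsHomogeneous k) (t : R) (z : σ → R) :
    eval (t • z) φ = t ^ k * eval z φ := by
  rw [eval_eq', eval_eq', mul_sum]
  refine sum_congr rfl fun d hd => ?_
  have hdeg : ∑ i, d i = k := by
    rw [← Finsupp.degree_eq_sum, Finsupp.degree_eq_weight_one]
    exact hφ (mem_support_iff.1 hd)
  simp only [Pi.smul_apply, smul_eq_mul, mul_pow, prod_mul_distrib, prod_pow_eq_pow_sum, hdeg]
  ring

theorem eval_smul_eq_sum_homogeneousComponent [CommSemiring R] [Fintype σ]
    (f : MvPolynomial σ R) (t : R) (z : σ → R) :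
    eval (t • z) f =
      ∑ k ∈ range (f.totalDegree + 1), t ^ k * eval z (homogeneousComponent k f) := by
  conv_lhs => rw [← sum_homogeneousComponent f]
  rw [map_sum]
  exact sum_congr rfl fun k _ => (homogeneousComponent_isHomogeneous k f).eval_smul t z

noncomputable def restrictLine [CommSemiring R] (f : MvPolynomial σ R) (p v : σ → R) : R[X] :=
  aeval (fun i => Polynomial.C (p i) + Polynomial.C (v i) * Polynomial.X) f

theorem eval_restrictLine [CommSemiring R] (f : MvPolynomial σ R) (p v : σ → R) (s : R) :
    (f.restrictLine p v).eval s = eval (p + s • v) f := by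
  simp only [restrictLine, aeval_def, Polynomial.algebraMap_eq, polynomial_eval_eval₂,
    Polynomial.eval_add, Polynomial.eval_C, Polynomial.eval_mul, Polynomial.eval_X]
  congr 1
  · ext; simp
  · ext i; simp [mul_comm]

theorem restrictLine_zero_right [CommRing R] [IsDomain R] [Infinite R] (f : MvPolynomial σ R)
    (p : σ → R) : f.restrictLine p 0 = Polynomial.C (eval p f) :=
  Polynomial.funext fun s => by simp [eval_restrictLine]

theorem restrictLine_smul_smul [CommRing R] [IsDomain R] [Infinite R] [Fintype σ]
    (f : MvPolynomial σ R) (t : R) (p v : σ → R) :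
    f.restrictLine (t • p) (t • v) =
      ∑ k ∈ range (f.totalDegree + 1), t ^ k • (homogeneousComponent k f).restrictLine p v := by
  refine Polynomial.funext fun s => ?_
  simp only [eval_restrictLine, Polynomial.eval_finsetSum, Polynomial.eval_smul, smul_eq_mul]
  rw [← eval_smul_eq_sum_homogeneousComponent, smul_add, smul_comm t s v]

theorem zero_le_eval_derivative_derivative_restrictLine {f : MvPolynomial σ ℝ}
    {U : Set (σ → ℝ)} {q v : σ → ℝ} {s : ℝ} (hU : IsOpen U) (hs : q + s • v ∈ U)
    (hf : ConvexOn ℝ U fun y => eval y f) :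
    0 ≤ (f.restrictLine q v).derivative.derivative.eval s := by
  let L : ℝ →ᵃ[ℝ] σ → ℝ := AffineMap.lineMap q (q + v)
  have hL : ∀ u, L u = q + u • v := fun u => by
    simp only [L, AffineMap.lineMap_apply_module', add_sub_cancel_left, add_comm]
  refine Polynomial.zero_le_eval_derivative_derivative_of_convexOn (V := L ⁻¹' U)
    (hU.preimage AffineMap.lineMap_continuous) (by rwa [Set.mem_preimage, hL]) ?_
  exact (hf.comp_affineMap L).congr fun u _ => by simp [hL, eval_restrictLine]

theorem convexOn_univ_of_eval_derivative_derivative_restrictLine_nonneg {f : MvPolynomial σ ℝ}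
    (hf : ∀ x v s, 0 ≤ (f.restrictLine x v).derivative.derivative.eval s) :
    ConvexOn ℝ univ fun y => eval y f := by
  refine ⟨convex_univ, fun x _ y _ μ ν hμ hν hμν => ?_⟩
  have hline := (Polynomial.convexOn_univ_of_eval_derivative_derivative_nonneg
    (hf x (y - x))).2 (mem_univ 0) (mem_univ 1) hμ hν hμν
  obtain rfl : μ = 1 - ν := by linarith
  have hpt : x + ν • (y - x) = (1 - ν) • x + ν • y := by module
  simpa [eval_restrictLine, hpt] using hline

theorem eval_derivative_derivative_restrictLine_nonneg_of_ne_zero {f : MvPolynomial σ ℝ}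
    (hf : ∀ x v s, x + s • v ≠ 0 → 0 ≤ (f.restrictLine x v).derivative.derivative.eval s)
    (x v : σ → ℝ) (s : ℝ) : 0 ≤ (f.restrictLine x v).derivative.derivative.eval s := by
  rcases ne_or_eq (x + s • v) 0 with hxs | hxs
  · exact hf x v s hxs
  rcases eq_or_ne v 0 with rfl | hv
  · simp [restrictLine_zero_right]
  have hoff : ∀ s' ∈ ({s}ᶜ : Set ℝ), 0 ≤ (f.restrictLine x v).derivative.derivative.eval s' := by
    intro s' hs'
    refine hf x v s' ?_
    rw [show x + s' • v = (s' - s) • v by rw [eq_neg_of_add_eq_zero_left hxs]; module]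
    exact smul_ne_zero (sub_ne_zero.2 hs') hv
  have hclosed := isClosed_le (continuous_const (y := (0 : ℝ)))
    (f.restrictLine x v).derivative.derivative.continuous
  exact hclosed.closure_subset_iff.2 hoff (by simp)

noncomputable def leadingForm [CommSemiring R] (f : MvPolynomial σ R) : MvPolynomial σ R :=
  homogeneousComponent f.totalDegree f

theorem zero_le_eval_derivative_derivative_restrictLine_leadingForm [Fintype σ]
    {f : MvPolynomial σ ℝ} {r : ℝ}
    (hf : ∀ x : σ → ℝ, r < √(∑ i, x i ^ 2) →
      ∃ U : Set (σ → ℝ), x ∈ U ∧ IsOpen U ∧ Convex ℝ U ∧ ConvexOn ℝ U fun y => eval y f)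
    {x v : σ → ℝ} {s : ℝ} (hxs : x + s • v ≠ 0) :
    0 ≤ (f.leadingForm.restrictLine x v).derivative.derivative.eval s := by
  set c : ℕ → ℝ := fun k =>
    ((homogeneousComponent k f).restrictLine x v).derivative.derivative.eval s
  have hscale : ∀ t : ℝ, (f.restrictLine (t • x) (t • v)).derivative.derivative.eval s =
      ∑ k ∈ range (f.totalDegree + 1), t ^ k * c k := fun t => by
    simp [c, restrictLine_smul_smul, Polynomial.eval_finsetSum]
  have hnonneg : ∀ᶠ t : ℝ in atTop,
      0 ≤ (∑ k ∈ range (f.totalDegree + 1), t ^ k * c k) / t ^ f.totalDegree := by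
    filter_upwards [eventually_lt_sqrt_sum_sq_smul hxs r, eventually_ge_atTop (0 : ℝ)]
      with t hR ht
    obtain ⟨U, hU, hUo, -, hfU⟩ := hf _ hR
    rw [← hscale]
    refine div_nonneg (zero_le_eval_derivative_derivative_restrictLine hUo ?_ hfU) (pow_nonneg ht _)
    rwa [smul_add, smul_comm t s v] at hU
  exact ge_of_tendsto (tendsto_sum_range_pow_mul_div_pow_atTop c _) hnonneg

end MvPolynomial

theorem stmt_8_general (n : ℕ) (f : MvPolynomial (Fin n) ℝ) (R : ℝ)
    (hconv : ∀ x : Fin n → ℝ, R < Real.sqrt (∑ i, x i ^ 2) →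
      ∃ U : Set (Fin n → ℝ), x ∈ U ∧ IsOpen U ∧ Convex ℝ U ∧
        ConvexOn ℝ U (fun y => MvPolynomial.eval y f)) :
    ConvexOn ℝ Set.univ
      (fun y => MvPolynomial.eval y (MvPolynomial.homogeneousComponent f.totalDegree f)) :=
  MvPolynomial.convexOn_univ_of_eval_derivative_derivative_restrictLine_nonneg <|
    MvPolynomial.eval_derivative_derivative_restrictLine_nonneg_of_ne_zero fun _ _ _ =>
      MvPolynomial.zero_le_eval_derivative_derivative_restrictLine_leadingForm hconv

/-- If a polynomial `f` in `n ≥ 2` variables of degree `d` is convex at infinity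
(locally convex on `{x : |x| > R}` for some `R`), then its leading form `f_d`
is convex on `ℝⁿ`. -/
theorem stmt_8 (n : ℕ) (hn : 2 ≤ n) (f : MvPolynomial (Fin n) ℝ) (R : ℝ)
    (hconv : ∀ x : Fin n → ℝ, R < Real.sqrt (∑ i, x i ^ 2) →
      ∃ U : Set (Fin n → ℝ), x ∈ U ∧ IsOpen U ∧ Convex ℝ U ∧
        ConvexOn ℝ U (fun y => MvPolynomial.eval y f)) :
    ConvexOn ℝ Set.univ
      (fun y => MvPolynomial.eval y (MvPolynomial.homogeneousComponent f.totalDegree f)) :=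
  stmt_8_general n f R hconv
end

section
/- Let f ∈ ℝ[x₁,…,xₙ] be a nonzero homogeneous polynomial of degree d with f(x) > 0 for all x ≠ 0. Then there exists N ∈ ℕ such that ψ_N(x) = (x₁²+⋯+xₙ²)^N f(x) is a strictly convex function on ℝⁿ. -/
/-!
Restrict `ψ_N = ‖·‖^{2N} f` to a line `s ↦ x + s • v`. Its second derivative is the second
directional derivative `D_v² ψ_N`, which is homogeneous in the base point and quadratic in `v`, so
it suffices to make it positive on the product of unit spheres. There, with `t = ⟨u, w⟩`,
`D_w² ψ_N(u) = N (4 (N - 1) t² f(u) + 2 f(u) + 4 t D_w f(u)) + D_w² f(u)`; since `f ≥ m > 0` and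
`D_w f`, `D_w² f` are bounded on the compact sphere, completing the square in `t` makes this
positive once `N` is large. The second derivative along a line is then positive except at the
(at most one) parameter where the line meets the origin, which still makes the first derivative
strictly increasing.
-/

open MvPolynomial Set

lemma strictMono_of_hasDerivAt_pos_of_ne {f f' : ℝ → ℝ} (a : ℝ)
    (hf : ∀ x, HasDerivAt f (f' x) x) (hf' : ∀ x, x ≠ a → 0 < f' x) : StrictMono f := by
  have hcont : Continuous f := continuous_iff_continuousAt.2 fun x => (hf x).continuousAt
  refine StrictMonoOn.Iic_union_Ici (a := a) ?_ ?_
  · refine strictMonoOn_of_deriv_pos (convex_Iic a) hcont.continuousOn fun x hx => ?_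
    rw [interior_Iic] at hx
    rw [(hf x).deriv]
    exact hf' x hx.ne
  · refine strictMonoOn_of_deriv_pos (convex_Ici a) hcont.continuousOn fun x hx => ?_
    rw [interior_Ici] at hx
    rw [(hf x).deriv]
    exact hf' x hx.ne'

lemma exists_forall_add_smul_ne_zero {E : Type*} [AddCommGroup E] [Module ℝ E] (x : E) {v : E}
    (hv : v ≠ 0) : ∃ a : ℝ, ∀ t, t ≠ a → x + t • v ≠ 0 := by
  by_cases h : ∃ a : ℝ, x + a • v = 0
  · obtain ⟨a, ha⟩ := h
    refine ⟨a, fun t ht hzero => ht ?_⟩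
    have : (t - a) • v = 0 := by rw [sub_smul, ← add_sub_add_left_eq_sub, hzero, ha, sub_zero]
    exact sub_eq_zero.1 ((smul_eq_zero.1 this).resolve_right hv)
  · exact ⟨0, fun t _ => not_exists.1 h t⟩

lemma isCompact_sum_sq_eq_one {ι : Type*} [Fintype ι] :
    IsCompact {u : ι → ℝ | ∑ i, u i ^ 2 = 1} := by
  refine (isCompact_closedBall (0 : ι → ℝ) 1).of_isClosed_subset
    (isClosed_eq (by fun_prop) continuous_const) fun u hu => ?_
  rw [mem_closedBall_zero_iff, pi_norm_le_iff_of_nonneg zero_le_one]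
  intro i
  rw [Real.norm_eq_abs, ← sq_le_one_iff_abs_le_one, ← hu.out]
  exact Finset.single_le_sum (fun j _ => sq_nonneg (u j)) (Finset.mem_univ i)

lemma exists_pos_smul_of_ne_zero {ι : Type*} [Fintype ι] {p : ι → ℝ} (hp : p ≠ 0) :
    ∃ c : ℝ, 0 < c ∧ ∃ u : ι → ℝ, ∑ i, u i ^ 2 = 1 ∧ p = c • u := by
  have hpos : 0 < ∑ i, p i ^ 2 := by
    obtain ⟨i, hi⟩ := Function.ne_iff.1 hp
    have hi : p i ≠ 0 := hi
    exact Finset.sum_pos' (fun j _ => sq_nonneg (p j)) ⟨i, Finset.mem_univ i, by positivity⟩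
  have hc : 0 < √(∑ i, p i ^ 2) := Real.sqrt_pos.2 hpos
  refine ⟨_, hc, (√(∑ i, p i ^ 2))⁻¹ • p, ?_, (smul_inv_smul₀ hc.ne' p).symm⟩
  simp only [Pi.smul_apply, smul_eq_mul, mul_pow, ← Finset.mul_sum, inv_pow,
    Real.sq_sqrt hpos.le, inv_mul_cancel₀ hpos.ne']

lemma quadratic_form_pos_of_bounds {N m B F G H : ℝ} (t : ℝ) (hm : 0 < m) (hF : m ≤ F)
    (hG : |G| ≤ B) (hH : |H| ≤ B) (hN₁ : B ^ 2 < (N - 1) * m ^ 2) (hN₂ : B < N * m) :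
    0 < 4 * N * (N - 1) * t ^ 2 * F + 2 * N * F + 4 * N * t * G + H := by
  have ha : 0 < N - 1 := by nlinarith [sq_nonneg B]
  have hGsq : G ^ 2 ≤ B ^ 2 := by
    rw [← sq_abs G]
    exact pow_le_pow_left₀ (abs_nonneg G) hG 2
  have hquad : F ≤ 4 * (N - 1) * t ^ 2 * F + 4 * t * G + 2 * F := by
    -- `(N - 1) F (4 (N - 1) t² F + 4 t G + F) = (2 (N - 1) F t + G)² + (N - 1) F² - G²`
    have hsq : 0 ≤ (N - 1) * F * (4 * (N - 1) * t ^ 2 * F + 4 * t * G + F) := by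
      nlinarith [sq_nonneg (2 * (N - 1) * F * t + G), mul_le_mul_of_nonneg_left
        (pow_le_pow_left₀ hm.le hF 2) ha.le]
    nlinarith [nonneg_of_mul_nonneg_right hsq (mul_pos ha (hm.trans_le hF))]
  nlinarith [(abs_le.1 hH).1]

lemma Derivation.ringHom_apply_apply_pow_mul {R A B : Type*} [CommRing R] [CommRing A]
    [Algebra R A] [CommRing B] (D : Derivation R A A) (φ : A →+* B) {a : A} (ha : φ a = 1)
    (b : A) (N : ℕ) :
    φ (D (D (a ^ N * b))) = N * (N - 1) * φ (D a) ^ 2 * φ b + N * φ (D (D a)) * φ b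
      + 2 * N * φ (D a) * φ (D b) + φ (D (D b)) := by
  rcases N with _ | N
  · simp
  · simp only [leibniz, leibniz_pow, smul_eq_mul, nsmul_eq_mul, map_add, map_mul, map_pow,
      map_natCast, _root_.map_natCast, map_one_eq_zero, map_one, ha, one_pow,
      add_tsub_cancel_right, Nat.cast_add, Nat.cast_one, mul_zero, add_zero]
    ring

namespace MvPolynomial

lemma IsHomogeneous.eval_smul_s10 {R τ : Type*} [CommSemiring R] {g : MvPolynomial τ R} {e : ℕ}
    (hg : g.IsHomogeneous e) (c : R) (x : τ → R) : eval (c • x) g = c ^ e * eval x g := by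
  simp only [eval_eq, Finset.mul_sum, Pi.smul_apply, smul_eq_mul, mul_pow,
    Finset.prod_mul_distrib, Finset.prod_pow_eq_pow_sum]
  refine Finset.sum_congr rfl fun m hm => ?_
  rw [← hg.degree_eq_sum_deg_support hm]
  ring

variable {σ : Type*} [Fintype σ]

noncomputable def dirDeriv (v : σ → ℝ) : Derivation ℝ (MvPolynomial σ ℝ) (MvPolynomial σ ℝ) :=
  ∑ i, v i • pderiv i

lemma dirDeriv_apply (v : σ → ℝ) (g : MvPolynomial σ ℝ) :
    dirDeriv v g = ∑ i, v i • pderiv i g := by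
  rw [dirDeriv, ← Derivation.coeFnAddMonoidHom_apply, map_sum, Finset.sum_apply]
  rfl

lemma eval_dirDeriv (p v : σ → ℝ) (g : MvPolynomial σ ℝ) :
    eval p (dirDeriv v g) = ∑ i, v i * eval p (pderiv i g) := by
  simp [dirDeriv_apply, smul_eq_C_mul]

lemma dirDeriv_smul (c : ℝ) (v : σ → ℝ) (g : MvPolynomial σ ℝ) :
    dirDeriv (c • v) g = c • dirDeriv v g := by
  simp [dirDeriv_apply, Finset.smul_sum, smul_smul]

lemma dirDeriv_X (v : σ → ℝ) (i : σ) : dirDeriv v (X i) = C (v i) := by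
  classical
  simp [dirDeriv_apply, pderiv_X, Pi.single_apply, smul_eq_C_mul]

lemma hasDerivAt_eval_add_smul (g : MvPolynomial σ ℝ) (x v : σ → ℝ) (t : ℝ) :
    HasDerivAt (fun s : ℝ => eval (x + s • v) g) (eval (x + t • v) (dirDeriv v g)) t := by
  induction g using MvPolynomial.induction_on with
  | C a => simpa [dirDeriv_apply] using hasDerivAt_const t a
  | add p q hp hq => simpa using hp.fun_add hq
  | mul_X p i hp =>
    have hcoord : HasDerivAt (fun s : ℝ => x i + s * v i) (v i) t := by
      simpa using ((hasDerivAt_id t).mul_const (v i)).const_add (x i)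
    have hfun : (fun s : ℝ => eval (x + s • v) (p * X i))
        = fun s => eval (x + s • v) p * (x i + s * v i) := by
      funext s
      simp
    rw [hfun]
    refine (hp.fun_mul hcoord).congr_deriv ?_
    simp only [Derivation.leibniz, dirDeriv_X, smul_eq_mul, map_add, map_mul, eval_C, eval_X,
      Pi.add_apply, Pi.smul_apply]
    ring

/- Proved by differentiating the scaling law along lines. Keeping a power of `c` on the left avoids
the case `e = 0` forced by the truncated degree `e - 1` in `IsHomogeneous.pderiv`. -/
lemma eval_smul_dirDeriv_of_eval_smul {g : MvPolynomial σ ℝ} {k e : ℕ} {c : ℝ}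
    (hg : ∀ x, c ^ k * eval (c • x) g = c ^ e * eval x g) (v x : σ → ℝ) :
    c ^ (k + 1) * eval (c • x) (dirDeriv v g) = c ^ e * eval x (dirDeriv v g) := by
  have hline : (fun s : ℝ => c ^ k * eval (c • x + s • (c • v)) g)
      = fun s => c ^ e * eval (x + s • v) g := by
    funext s
    rw [← hg, smul_add, smul_comm c s]
  have hscaled := (hasDerivAt_eval_add_smul g (c • x) (c • v) 0).const_mul (c ^ k)
  rw [hline] at hscaled
  have hderiv := hscaled.unique ((hasDerivAt_eval_add_smul g x v 0).const_mul (c ^ e))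
  simpa [dirDeriv_smul, pow_succ, mul_assoc] using hderiv

lemma IsHomogeneous.eval_smul_dirDeriv_dirDeriv {P : MvPolynomial σ ℝ} {e : ℕ}
    (hP : P.IsHomogeneous e) (c : ℝ) (v x : σ → ℝ) :
    c ^ 2 * eval (c • x) (dirDeriv v (dirDeriv v P))
      = c ^ e * eval x (dirDeriv v (dirDeriv v P)) :=
  eval_smul_dirDeriv_of_eval_smul
    (eval_smul_dirDeriv_of_eval_smul (k := 0) (fun y => by rw [pow_zero, one_mul, hP.eval_smul_s10]) v)
    v x

lemma strictConvexOn_univ_eval_of_dirDeriv_dirDeriv_pos {P : MvPolynomial σ ℝ}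
    (hP : ∀ p v : σ → ℝ, p ≠ 0 → v ≠ 0 → 0 < eval p (dirDeriv v (dirDeriv v P))) :
    StrictConvexOn ℝ univ fun x => eval x P := by
  refine ⟨convex_univ, fun x _ y _ hxy a b ha hb hab => ?_⟩
  have hv : y - x ≠ 0 := sub_ne_zero.2 hxy.symm
  obtain ⟨t₀, ht₀⟩ := exists_forall_add_smul_ne_zero x hv
  have hmono : StrictMono fun s : ℝ => eval (x + s • (y - x)) (dirDeriv (y - x) P) :=
    strictMono_of_hasDerivAt_pos_of_ne t₀ (hasDerivAt_eval_add_smul _ x (y - x))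
      fun t ht => hP _ _ (ht₀ t ht) hv
  have hline : StrictConvexOn ℝ univ fun s : ℝ => eval (x + s • (y - x)) P := by
    refine StrictMono.strictConvexOn_univ_of_deriv
      ((continuous_eval P).comp (by fun_prop)) ?_
    convert hmono using 1
    funext s
    exact (hasDerivAt_eval_add_smul P x (y - x) s).deriv
  obtain rfl : a = 1 - b := eq_sub_of_add_eq hab
  convert hline.2 (mem_univ 0) (mem_univ 1) zero_ne_one ha hb hab using 2
  · module
  · simp
  · simp

lemma IsHomogeneous.eval_dirDeriv_dirDeriv_pos {P : MvPolynomial σ ℝ} {e : ℕ}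
    (hP : P.IsHomogeneous e)
    (hsphere : ∀ u w : σ → ℝ, ∑ i, u i ^ 2 = 1 → ∑ i, w i ^ 2 = 1 →
      0 < eval u (dirDeriv w (dirDeriv w P)))
    {p v : σ → ℝ} (hp : p ≠ 0) (hv : v ≠ 0) : 0 < eval p (dirDeriv v (dirDeriv v P)) := by
  obtain ⟨c, hc, u, hu, rfl⟩ := exists_pos_smul_of_ne_zero hp
  obtain ⟨b, hb, w, hw, rfl⟩ := exists_pos_smul_of_ne_zero hv
  have hscaled : 0 < c ^ 2 * eval (c • u) (dirDeriv w (dirDeriv w P)) := by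
    rw [hP.eval_smul_dirDeriv_dirDeriv]
    exact mul_pos (pow_pos hc e) (hsphere u w hu hw)
  have hunscaled := pos_of_mul_pos_right hscaled (by positivity)
  simp only [dirDeriv_smul, Derivation.map_smul, smul_eval]
  positivity

lemma continuous_eval_dirDeriv (g : MvPolynomial σ ℝ) :
    Continuous fun q : (σ → ℝ) × (σ → ℝ) => eval q.1 (dirDeriv q.2 g) := by
  have := fun h : MvPolynomial σ ℝ => continuous_eval h
  simp_rw [eval_dirDeriv]
  fun_prop

lemma continuous_eval_dirDeriv_dirDeriv (g : MvPolynomial σ ℝ) :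
    Continuous fun q : (σ → ℝ) × (σ → ℝ) => eval q.1 (dirDeriv q.2 (dirDeriv q.2 g)) := by
  have := fun h : MvPolynomial σ ℝ => continuous_eval h
  simp only [dirDeriv_apply _ g, map_sum, Derivation.map_smul, smul_eval, eval_dirDeriv]
  fun_prop

noncomputable def sumSq : MvPolynomial σ ℝ := ∑ i, X i ^ 2

lemma eval_sumSq (x : σ → ℝ) : eval x sumSq = ∑ i, x i ^ 2 := by
  simp [sumSq]

lemma isHomogeneous_sumSq : (sumSq : MvPolynomial σ ℝ).IsHomogeneous 2 :=
  IsHomogeneous.sum _ _ _ fun i _ => isHomogeneous_X_pow i 2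

lemma dirDeriv_sumSq (v : σ → ℝ) : dirDeriv v sumSq = ∑ i, C (2 * v i) * X i := by
  simp only [sumSq, map_sum, Derivation.leibniz_pow, dirDeriv_X]
  refine Finset.sum_congr rfl fun i _ => ?_
  simp only [Nat.add_one_sub_one, pow_one, nsmul_eq_mul, Nat.cast_ofNat, map_mul, map_ofNat]
  ring

lemma eval_dirDeriv_sumSq (p v : σ → ℝ) :
    eval p (dirDeriv v sumSq) = 2 * ∑ i, p i * v i := by
  simp only [dirDeriv_sumSq, map_sum, map_mul, eval_C, eval_X, Finset.mul_sum]
  exact Finset.sum_congr rfl fun i _ => by ring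

lemma eval_dirDeriv_dirDeriv_sumSq (p v : σ → ℝ) :
    eval p (dirDeriv v (dirDeriv v sumSq)) = 2 * ∑ i, v i ^ 2 := by
  simp only [dirDeriv_sumSq, map_sum, Derivation.leibniz, dirDeriv_X, derivation_C,
    smul_eq_mul, mul_zero, add_zero, map_mul, eval_C, Finset.mul_sum]
  exact Finset.sum_congr rfl fun i _ => by ring

lemma eval_dirDeriv_dirDeriv_sumSq_pow_mul {u w : σ → ℝ} (hu : ∑ i, u i ^ 2 = 1)
    (hw : ∑ i, w i ^ 2 = 1) (f : MvPolynomial σ ℝ) (N : ℕ) :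
    eval u (dirDeriv w (dirDeriv w (sumSq ^ N * f)))
      = 4 * N * (N - 1) * (∑ i, u i * w i) ^ 2 * eval u f + 2 * N * eval u f
        + 4 * N * (∑ i, u i * w i) * eval u (dirDeriv w f)
        + eval u (dirDeriv w (dirDeriv w f)) := by
  rw [Derivation.ringHom_apply_apply_pow_mul _ _ (by rw [eval_sumSq, hu]),
    eval_dirDeriv_sumSq, eval_dirDeriv_dirDeriv_sumSq, hw]
  ring

lemma exists_eval_dirDeriv_dirDeriv_sumSq_pow_mul_pos {f : MvPolynomial σ ℝ}
    (hpos : ∀ x : σ → ℝ, x ≠ 0 → 0 < eval x f) :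
    ∃ N : ℕ, ∀ u w : σ → ℝ, ∑ i, u i ^ 2 = 1 → ∑ i, w i ^ 2 = 1 →
      0 < eval u (dirDeriv w (dirDeriv w (sumSq ^ N * f))) := by
  have hK := isCompact_sum_sq_eq_one (ι := σ)
  obtain ⟨m, hm, hmf⟩ := hK.exists_forall_le' (continuous_eval f).continuousOn (a := 0)
    fun u hu => hpos u fun h => by simp [h] at hu
  obtain ⟨B₁, hB₁⟩ := (hK.prod hK).exists_bound_of_continuousOn
    (continuous_eval_dirDeriv f).continuousOn
  obtain ⟨B₂, hB₂⟩ := (hK.prod hK).exists_bound_of_continuousOn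
    (continuous_eval_dirDeriv_dirDeriv f).continuousOn
  set B := max B₁ B₂
  obtain ⟨N, hN⟩ := exists_nat_gt (max (B ^ 2 / m ^ 2 + 1) (B / m))
  refine ⟨N, fun u w hu hw => ?_⟩
  rw [eval_dirDeriv_dirDeriv_sumSq_pow_mul hu hw]
  refine quadratic_form_pos_of_bounds _ hm (hmf u hu)
    ((hB₁ (u, w) ⟨hu, hw⟩).trans (le_max_left _ _))
    ((hB₂ (u, w) ⟨hu, hw⟩).trans (le_max_right _ _)) ?_ ?_
  · have hN₁ := (le_max_left _ _).trans_lt hN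
    rwa [← lt_sub_iff_add_lt, div_lt_iff₀ (by positivity)] at hN₁
  · have hN₂ := (le_max_right _ _).trans_lt hN
    rwa [div_lt_iff₀ hm] at hN₂

end MvPolynomial

theorem stmt_10_general (n d : ℕ) (f : MvPolynomial (Fin n) ℝ)
    (hhom : f.IsHomogeneous d)
    (hpos : ∀ x : Fin n → ℝ, x ≠ 0 → 0 < MvPolynomial.eval x f) :
    ∃ N : ℕ, StrictConvexOn ℝ Set.univ
      (fun x : Fin n → ℝ => (∑ i, x i ^ 2) ^ N * MvPolynomial.eval x f) := by
  obtain ⟨N, hN⟩ := exists_eval_dirDeriv_dirDeriv_sumSq_pow_mul_pos hpos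
  have hP := (isHomogeneous_sumSq.pow N).mul hhom
  refine ⟨N, ?_⟩
  simpa [eval_sumSq] using strictConvexOn_univ_eval_of_dirDeriv_dirDeriv_pos
    fun p v hp hv => hP.eval_dirDeriv_dirDeriv_pos hN hp hv

/-- If `f` is a nonzero homogeneous polynomial of degree `d` positive off the origin, then
`ψ_N(x) = (x₁²+⋯+xₙ²)^N f(x)` is strictly convex on `ℝⁿ` for some `N`. -/
theorem stmt_10 (n d : ℕ) (f : MvPolynomial (Fin n) ℝ) (hf0 : f ≠ 0)
    (hhom : f.IsHomogeneous d)
    (hpos : ∀ x : Fin n → ℝ, x ≠ 0 → 0 < MvPolynomial.eval x f) :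
    ∃ N : ℕ, StrictConvexOn ℝ Set.univ
      (fun x : Fin n → ℝ => (∑ i, x i ^ 2) ^ N * MvPolynomial.eval x f) :=
  stmt_10_general n d f hhom hpos
end

section
/- Let g₁,…,g_r ∈ ℝ[x₁,…,xₙ] be μ-strongly concave polynomials (μ > 0), i.e., g_i(y) ≤ g_i(x) + ⟨y-x, ∇g_i(x)⟩ - (μ/2)|y-x|² for all x,y, and let X = {x : g₁(x) ≥ 0, …, g_r(x) ≥ 0} be nonempty. Then for every η > 0, setting δ₀ = η²μ/2, for every 0 < δ ≤ δ₀ and every x with g_i(x) ≥ -δ for all i, we have dist(x, X) ≤ η. -/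
/-! Strong concavity along the segment from `x` to a feasible point `y` gives, at the point `z`
at distance `η` from `x`, `g_i(z) ≥ (1 - s)(-δ) + s(1 - s)(μ/2)‖y - x‖²` with `s = η / ‖y - x‖`,
and `s‖y - x‖² = η‖y - x‖ ≥ η²` makes the right-hand side nonnegative once `δ ≤ η²μ/2`. -/

open Set AffineMap

variable {E : Type*} [NormedAddCommGroup E]

theorem strongConcaveOn_univ_of_le_inner [InnerProductSpace ℝ E] {f : E → ℝ} {f' : E → E}
    {m : ℝ} (hf : ∀ x y, f y ≤ f x + inner ℝ (y - x) (f' x) - m / 2 * ‖y - x‖ ^ 2) :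
    StrongConcaveOn univ m f := by
  refine ⟨convex_univ, fun x _ y _ a b ha hb hab => ?_⟩
  obtain rfl : b = 1 - a := by linarith
  set z := a • x + (1 - a) • y
  have hxz : x - z = (1 - a) • (x - y) := by module
  have hyz : y - z = (-a) • (x - y) := by module
  have hx := hf z x
  have hy := hf z y
  rw [hxz, real_inner_smul_left, norm_smul, Real.norm_eq_abs, abs_of_nonneg hb] at hx
  rw [hyz, real_inner_smul_left, norm_smul, Real.norm_eq_abs, abs_neg, abs_of_nonneg ha] at hy
  simp only [smul_eq_mul]
  -- weighting the tangent inequalities at `z` by `a` and `1 - a` cancels the gradient terms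
  linarith [mul_le_mul_of_nonneg_left hx ha, mul_le_mul_of_nonneg_left hy hb]

section NormedSpace

variable [NormedSpace ℝ E] {f : E → ℝ} {μ δ η : ℝ} {x y : E}

theorem StrongConcaveOn.nonneg_lineMap (hf : StrongConcaveOn univ μ f) (hμ : 0 ≤ μ)
    (hη : 0 < η) (hδ : δ ≤ η ^ 2 * μ / 2) (hx : -δ ≤ f x) (hy : 0 ≤ f y)
    (hxy : η ≤ dist x y) : 0 ≤ f (lineMap x y (η / dist x y)) := by
  set D := dist x y
  set s := η / D
  have hD : 0 < D := hη.trans_le hxy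
  have hsD : s * D = η := div_mul_cancel₀ η hD.ne'
  have hs0 : 0 ≤ s := by positivity
  have hs1 : s ≤ 1 := (div_le_one hD).2 hxy
  have hconc := hf.2 (mem_univ x) (mem_univ y) (sub_nonneg.2 hs1) hs0 (sub_add_cancel 1 s)
  rw [← dist_eq_norm, ← lineMap_apply_module x y s] at hconc
  simp only [smul_eq_mul] at hconc
  have hηD : δ ≤ μ / 2 * (η * D) := by
    calc δ ≤ μ / 2 * (η * η) := by linarith
      _ ≤ μ / 2 * (η * D) := by gcongr
  calc 0 ≤ (1 - s) * (μ / 2 * (η * D) - δ) := mul_nonneg (by linarith) (by linarith)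
    _ = (1 - s) * -δ + (1 - s) * s * (μ / 2 * D ^ 2) := by rw [← hsD]; ring
    _ ≤ (1 - s) * f x + s * f y + (1 - s) * s * (μ / 2 * D ^ 2) := by
      linarith [mul_le_mul_of_nonneg_left hx (sub_nonneg.2 hs1), mul_nonneg hs0 hy]
    _ ≤ _ := hconc

theorem exists_dist_le_of_strongConcaveOn {ι : Type*} {g : ι → E → ℝ}
    (hg : ∀ i, StrongConcaveOn univ μ (g i)) (hμ : 0 ≤ μ) (hη : 0 < η)
    (hδ : δ ≤ η ^ 2 * μ / 2) (hx : ∀ i, -δ ≤ g i x) (hy : ∀ i, 0 ≤ g i y) :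
    ∃ z, (∀ i, 0 ≤ g i z) ∧ dist x z ≤ η := by
  rcases le_or_gt (dist x y) η with hxy | hxy
  · exact ⟨y, hy, hxy⟩
  refine ⟨lineMap x y (η / dist x y),
    fun i => (hg i).nonneg_lineMap hμ hη hδ (hx i) (hy i) hxy.le, ?_⟩
  rw [dist_comm, dist_lineMap_left, Real.norm_of_nonneg (by positivity),
    div_mul_cancel₀ η (hη.trans hxy).ne']

end NormedSpace

theorem stmt_18_general (n r : ℕ) (g : Fin r → MvPolynomial (Fin n) ℝ) (μ : ℝ) (hμ : 0 < μ)
    (hconc : ∀ i : Fin r, ∀ x y : EuclideanSpace ℝ (Fin n),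
      MvPolynomial.eval (fun j => y j) (g i) ≤
        MvPolynomial.eval (fun j => x j) (g i) +
          (inner ℝ (y - x)
            (gradient (fun z : EuclideanSpace ℝ (Fin n) =>
              MvPolynomial.eval (fun j => z j) (g i)) x) : ℝ) -
          μ / 2 * ‖y - x‖ ^ 2)
    (X : Set (EuclideanSpace ℝ (Fin n)))
    (hX : X = {x | ∀ i : Fin r, 0 ≤ MvPolynomial.eval (fun j => x j) (g i)})
    (hXne : X.Nonempty)
    (η : ℝ) (hη : 0 < η) (δ : ℝ) (hδ : δ ≤ η ^ 2 * μ / 2)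
    (x : EuclideanSpace ℝ (Fin n))
    (hx : ∀ i : Fin r, -δ ≤ MvPolynomial.eval (fun j => x j) (g i)) :
    Metric.infDist x X ≤ η := by
  obtain ⟨y, hy⟩ := hXne
  rw [hX] at hy
  obtain ⟨z, hz, hxz⟩ := exists_dist_le_of_strongConcaveOn
    (fun i => strongConcaveOn_univ_of_le_inner (hconc i)) hμ.le hη hδ hx hy
  exact (Metric.infDist_le_dist_of_mem (hX ▸ hz : z ∈ X)).trans hxz

/-- If `g₁,…,g_r` are `μ`-strongly concave polynomials and
`X = {x : g₁(x) ≥ 0, …, g_r(x) ≥ 0}` is nonempty, then for every `η > 0` and every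
`0 < δ ≤ η²μ/2`, any `x` with `g_i(x) ≥ -δ` for all `i` satisfies `dist(x, X) ≤ η`. -/
theorem stmt_18 (n r : ℕ) (g : Fin r → MvPolynomial (Fin n) ℝ) (μ : ℝ) (hμ : 0 < μ)
    (hconc : ∀ i : Fin r, ∀ x y : EuclideanSpace ℝ (Fin n),
      MvPolynomial.eval (fun j => y j) (g i) ≤
        MvPolynomial.eval (fun j => x j) (g i) +
          (inner ℝ (y - x)
            (gradient (fun z : EuclideanSpace ℝ (Fin n) =>
              MvPolynomial.eval (fun j => z j) (g i)) x) : ℝ) -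
          μ / 2 * ‖y - x‖ ^ 2)
    (X : Set (EuclideanSpace ℝ (Fin n)))
    (hX : X = {x | ∀ i : Fin r, 0 ≤ MvPolynomial.eval (fun j => x j) (g i)})
    (hXne : X.Nonempty)
    (η : ℝ) (hη : 0 < η) (δ : ℝ) (hδ0 : 0 < δ) (hδ : δ ≤ η ^ 2 * μ / 2)
    (x : EuclideanSpace ℝ (Fin n))
    (hx : ∀ i : Fin r, -δ ≤ MvPolynomial.eval (fun j => x j) (g i)) :
    Metric.infDist x X ≤ η :=
  stmt_18_general n r g μ hμ hconc X hX hXne η hη δ hδ x hx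
end

section
/- Let A ≥ 1, 0 < δ < A, M ≥ 1, r ≥ 1, and let N ∈ ℕ satisfy N > (r-1)A/2 and N > A(2M+1-δ)/δ². Define φ(t) = t·((t/A) - 1 + δ/(2A))^{2N}. Then φ(t) < A/(2N+1) for all t ∈ [0,A], and φ(t) ≤ -2M - (r-1)A/(2N+1) for all t ≤ -δ. -/
/-!
Write `x = t / A` and `c = δ / (2A) < 1/2`, so that `φ(t) = A x (x - 1 + c)^{2N}`. On `[0, 1]`,
either `v = 1 - c - x ≥ 0` and the binomial inequality `v^{n+1} + (n+1) x v^n ≤ (x + v)^{n+1}`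
with `x + v = 1 - c < 1` gives `(2N+1) x v^{2N} < 1`, or `0 < x - 1 + c ≤ c < 1/2` and
`(2N+1) x (x-1+c)^{2N} ≤ (2(x-1+c))^{2N} < 1`. For `t ≤ -δ` we have `|x - 1 + c| ≥ 1 + c`, so
Bernoulli's inequality gives `φ(t) ≤ -δ (1 + 2Nc) = -δ - Nδ²/A`, and the two lower bounds on `N`
turn this into the claimed bound.
-/

section

variable {R : Type*} [CommRing R] [LinearOrder R] [IsStrictOrderedRing R] {x v c u : R} {n : ℕ}

lemma succ_mul_mul_pow_lt_one_of_add_lt_one (hx : 0 ≤ x) (hv : 0 ≤ v) (h : x + v < 1) :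
    (n + 1) * x * v ^ n < 1 :=
  calc (n + 1) * x * v ^ n ≤ v ^ (n + 1) + (n + 1 : ℕ) * v ^ n * x := by
        push_cast; nlinarith [pow_nonneg hv (n + 1)]
    _ ≤ (v + x) ^ (n + 1) := pow_add_mul_le_add_pow hv (by linarith) (n + 1)
    _ < 1 := pow_lt_one₀ (by positivity) (by linarith) n.succ_ne_zero

lemma succ_mul_mul_pow_lt_one_of_two_mul_lt_one (hx₀ : 0 ≤ x) (hx₁ : x ≤ 1) (hv₀ : 0 ≤ v)
    (hv : 2 * v < 1) (hn : n ≠ 0) : (n + 1) * x * v ^ n < 1 :=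
  calc (n + 1) * x * v ^ n ≤ 2 ^ n * 1 * v ^ n := by
        gcongr
        exact_mod_cast n.lt_two_pow_self
    _ = (2 * v) ^ n := by ring
    _ < 1 := pow_lt_one₀ (by positivity) hv hn

lemma succ_mul_mul_abs_pow_lt_one (hx₀ : 0 ≤ x) (hx₁ : x ≤ 1) (hc₀ : 0 < c) (hc : 2 * c < 1)
    (hn : n ≠ 0) : (n + 1) * x * |x - 1 + c| ^ n < 1 := by
  rcases le_or_gt (x - 1 + c) 0 with hneg | hpos
  · rw [abs_of_nonpos hneg]
    exact succ_mul_mul_pow_lt_one_of_add_lt_one hx₀ (by linarith) (by linarith)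
  · rw [abs_of_pos hpos]
    exact succ_mul_mul_pow_lt_one_of_two_mul_lt_one hx₀ hx₁ hpos.le (by linarith) hn

lemma one_add_mul_le_pow_of_one_add_le_abs (hc : 0 ≤ c) (hu : 1 + c ≤ |u|) (hn : Even n) :
    1 + n * c ≤ u ^ n :=
  calc 1 + n * c ≤ (1 + c) ^ n := one_add_mul_le_pow (by linarith) n
    _ ≤ |u| ^ n := pow_le_pow_left₀ (by linarith) hu n
    _ = u ^ n := hn.pow_abs u

end

/-- The polynomial `φ`. -/
noncomputable def interpPoly (A δ : ℝ) (N : ℕ) (t : ℝ) : ℝ :=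
  t * (t / A - 1 + δ / (2 * A)) ^ (2 * N)

section

variable {A δ t : ℝ} {N : ℕ}

lemma interpPoly_lt_of_mem_Icc (hδ : 0 < δ) (hδA : δ < A) (hN : N ≠ 0) (ht : t ∈ Set.Icc 0 A) :
    interpPoly A δ N t < A / (2 * N + 1) := by
  have hA : 0 < A := hδ.trans hδA
  have key := succ_mul_mul_abs_pow_lt_one (x := t / A) (c := δ / (2 * A))
    (div_nonneg ht.1 hA.le) ((div_le_one hA).2 ht.2) (by positivity)
    (by rw [mul_div_assoc', div_lt_one (by positivity)]; linarith) (mul_ne_zero two_ne_zero hN)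
  rw [(even_two_mul N).pow_abs] at key
  push_cast at key
  rw [interpPoly, lt_div_iff₀ (by positivity)]
  calc t * (t / A - 1 + δ / (2 * A)) ^ (2 * N) * (2 * N + 1)
      = A * ((2 * N + 1) * (t / A) * (t / A - 1 + δ / (2 * A)) ^ (2 * N)) := by field_simp
    _ < A * 1 := by gcongr
    _ = A := mul_one A

lemma interpPoly_le_of_le_neg (hδ : 0 < δ) (hA : 0 < A) (ht : t ≤ -δ) :
    interpPoly A δ N t ≤ -δ - N * δ ^ 2 / A := by
  have hu : 1 + δ / (2 * A) ≤ |t / A - 1 + δ / (2 * A)| := by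
    have : t / A ≤ -(δ / A) := neg_div A δ ▸ div_le_div_of_nonneg_right ht hA.le
    have : δ / A = 2 * (δ / (2 * A)) := by field_simp
    have : 0 < δ / (2 * A) := by positivity
    rw [abs_of_neg (by linarith)]
    linarith
  have hpow := one_add_mul_le_pow_of_one_add_le_abs (by positivity) hu (even_two_mul N)
  calc t * (t / A - 1 + δ / (2 * A)) ^ (2 * N)
      ≤ -δ * (t / A - 1 + δ / (2 * A)) ^ (2 * N) :=
        mul_le_mul_of_nonneg_right ht ((even_two_mul N).pow_nonneg _)
    _ ≤ -δ * (1 + (2 * N : ℕ) * (δ / (2 * A))) := mul_le_mul_of_nonpos_left hpow (by linarith)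
    _ = -δ - N * δ ^ 2 / A := by push_cast; field_simp; ring

end

theorem stmt_19_general (A δ M : ℝ) (r : ℕ) (hδ0 : 0 < δ) (hδA : δ < A)
    (hr : 1 ≤ r) (N : ℕ)
    (hN1 : ((r : ℝ) - 1) * A / 2 < (N : ℝ))
    (hN2 : A * (2 * M + 1 - δ) / δ ^ 2 < (N : ℝ)) :
    (∀ t ∈ Set.Icc (0 : ℝ) A,
      t * (t / A - 1 + δ / (2 * A)) ^ (2 * N) < A / (2 * (N : ℝ) + 1)) ∧
    (∀ t : ℝ, t ≤ -δ →
      t * (t / A - 1 + δ / (2 * A)) ^ (2 * N) ≤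
        -2 * M - ((r : ℝ) - 1) * A / (2 * (N : ℝ) + 1)) := by
  have hA : 0 < A := hδ0.trans hδA
  have hr' : (1 : ℝ) ≤ r := by exact_mod_cast hr
  have hN : N ≠ 0 := by
    rintro rfl
    have : 0 ≤ ((r : ℝ) - 1) * A / 2 := by have := sub_nonneg.2 hr'; positivity
    push_cast at hN1
    linarith
  have hM : 2 * M + 1 - δ < N * δ ^ 2 / A := by
    rw [lt_div_iff₀ hA]
    rw [div_lt_iff₀ (by positivity)] at hN2
    linarith
  have hrA : ((r : ℝ) - 1) * A / (2 * N + 1) ≤ 1 := by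
    rw [div_le_one (by positivity)]
    linarith
  refine ⟨fun t ht ↦ interpPoly_lt_of_mem_Icc hδ0 hδA hN ht, fun t ht ↦ ?_⟩
  have := interpPoly_le_of_le_neg (N := N) hδ0 hA ht
  rw [interpPoly] at this
  linarith

/-- Elementary estimates for `φ(t) = t((t/A) - 1 + δ/(2A))^{2N}`: if `A ≥ 1`, `0 < δ < A`,
`M ≥ 1`, `r ≥ 1`, `N > ((r-1)A)/2` and `N > A(2M+1-δ)/δ²`, then `φ(t) < A/(2N+1)` on `[0,A]`
and `φ(t) ≤ -2M - (r-1)A/(2N+1)` for `t ≤ -δ`. -/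
theorem stmt_19 (A δ M : ℝ) (r : ℕ) (hA : 1 ≤ A) (hδ0 : 0 < δ) (hδA : δ < A)
    (hM : 1 ≤ M) (hr : 1 ≤ r) (N : ℕ)
    (hN1 : ((r : ℝ) - 1) * A / 2 < (N : ℝ))
    (hN2 : A * (2 * M + 1 - δ) / δ ^ 2 < (N : ℝ)) :
    (∀ t ∈ Set.Icc (0 : ℝ) A,
      t * (t / A - 1 + δ / (2 * A)) ^ (2 * N) < A / (2 * (N : ℝ) + 1)) ∧
    (∀ t : ℝ, t ≤ -δ →
      t * (t / A - 1 + δ / (2 * A)) ^ (2 * N) ≤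
        -2 * M - ((r : ℝ) - 1) * A / (2 * (N : ℝ) + 1)) :=
  stmt_19_general A δ M r hδ0 hδA hr N hN1 hN2
end
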